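/- arXiv:2111.07071 — 9 statements merged into one kernel-verified Lean document; each statement's English description precedes it below -/
import Mathlib

section
/- For all positive integers m and n with n ≥ 2, the number of break divisors on the complete multigraph K_n^m equals m^(n−1) · n^(n−2). -/
/-- The genus of the complete multigraph `K_n^m`, namely `m·n·(n−1)/2 − n + 1`. -/
def genusZ (m n : ℕ) : ℤ := (m : ℤ) * n * ((n : ℤ) - 1) / 2 - n + 1

/-- A break divisor on the complete multigraph `K_n^m`: a function `d : Fin n → ℕ`
with total degree `g(m,n)` such that for every nonempty subset `S` of the vertices,
`∑_{i∈S} d i ≥ m·|S|·(|S|−1)/2 − |S| + 1`. -/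
def IsBreakDivisor (m n : ℕ) (d : Fin n → ℕ) : Prop :=
  (∑ i, (d i : ℤ)) = genusZ m n ∧
  ∀ S : Finset (Fin n), S.Nonempty →
    (m : ℤ) * S.card * ((S.card : ℤ) - 1) / 2 - S.card + 1 ≤ ∑ i ∈ S, (d i : ℤ)

namespace BDaux

/-- triangular number as an integer -/
def Tri (k : ℕ) : ℤ := (k * (k-1) / 2 : ℕ)

lemma two_tri (k : ℕ) : 2 * Tri k = (k : ℤ) * ((k:ℤ) - 1) := by
  unfold Tri
  rcases k with _ | t
  · simp
  · have h2 : 2 ∣ (t+1) * t := by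
      have := Nat.even_mul_succ_self t
      exact (by simpa [Nat.mul_comm] using this : Even ((t+1)*t)).two_dvd
    have h : 2 * ((t+1) * t / 2) = (t+1) * t := Nat.mul_div_cancel' h2
    simp only [Nat.add_sub_cancel]
    push_cast [h]
    push_cast at h
    nlinarith [h]

def gZ (m n : ℕ) : ℤ := m * Tri n - n + 1

lemma genusZ_eq (m n : ℕ) : genusZ m n = gZ m n := by
  unfold genusZ gZ
  have h : (m : ℤ) * n * ((n:ℤ) - 1) = 2 * (m * Tri n) := by
    have := two_tri n; nlinarith [this]
  rw [h, Int.mul_ediv_cancel_left _ (by norm_num : (2:ℤ) ≠ 0)]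

lemma beta_eq (m s : ℕ) : (m : ℤ) * s * ((s : ℤ) - 1) / 2 - s + 1 = m * Tri s - s + 1 := by
  have h : (m : ℤ) * s * ((s:ℤ) - 1) = 2 * (m * Tri s) := by
    have := two_tri s; nlinarith [this]
  rw [h, Int.mul_ediv_cancel_left _ (by norm_num : (2:ℤ) ≠ 0)]

lemma isBreak_iff (m n : ℕ) (d : Fin n → ℕ) : IsBreakDivisor m n d ↔
    ((∑ i, (d i : ℤ)) = gZ m n ∧
     ∀ S : Finset (Fin n), S.Nonempty → (m:ℤ) * Tri S.card - S.card + 1 ≤ ∑ i ∈ S, (d i : ℤ)) := by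
  unfold IsBreakDivisor
  rw [genusZ_eq]
  refine and_congr Iff.rfl (forall_congr' fun S => forall_congr' fun _ => ?_)
  rw [beta_eq]

/-- The abstract cycle/window lemma. -/
lemma window_lemma (n : ℕ) (hn : 0 < n) (U : ℕ → ℤ)
    (hper : ∀ j, U (j + n) = U j)
    (hstep : ∀ j, (n : ℤ) ∣ U (j+1) - U j - 1) :
    ∃! j : ℕ, j < n ∧ ∀ k, 0 < k → k < n → U j + k ≤ U (j + k) := by
  -- general congruence
  have hcong : ∀ j k, (n : ℤ) ∣ U (j + k) - U j - k := by
    intro j k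
    induction k with
    | zero => simp
    | succ t ih =>
      have h2 := hstep (j + t)
      have e1 : j + (t+1) = j + t + 1 := by omega
      have : U (j + (t+1)) - U j - (t+1 : ℕ) =
          (U (j + t + 1) - U (j + t) - 1) + (U (j + t) - U j - t) := by
        rw [e1]; push_cast; ring
      rw [this]
      exact dvd_add h2 ih
  -- dvd + lower bound ⇒ ≥ k
  have key : ∀ j k, 0 < k → k < n → (0:ℤ) < U (j+k) - U j - (k:ℤ) + n → U j + k ≤ U (j+k) := by
    intro j k hk hkn hpos
    obtain ⟨q, hq⟩ := hcong j k
    by_contra hlt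
    push_neg at hlt
    have hq0 : q < 0 := by nlinarith
    have : (n:ℤ) * q ≤ n * (-1) := by
      apply mul_le_mul_of_nonneg_left _ (by positivity)
      omega
    omega
  -- existence of a minimizer with least index
  obtain ⟨j₁, hj₁mem, hj₁min⟩ :=
    Finset.exists_min_image (Finset.range n) U ⟨0, Finset.mem_range.mpr hn⟩
  have hex : ∃ j, j < n ∧ ∀ l, l < n → U j ≤ U l := by
    exact ⟨j₁, Finset.mem_range.mp hj₁mem, fun l hl => hj₁min l (Finset.mem_range.mpr hl)⟩
  classical
  let j₀ := Nat.find hex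
  obtain ⟨hj₀n, hj₀min⟩ : j₀ < n ∧ ∀ l, l < n → U j₀ ≤ U l := Nat.find_spec hex
  have hleast : ∀ l, l < j₀ → U j₀ < U l := by
    intro l hl
    have hnl : ¬ (l < n ∧ ∀ l', l' < n → U l ≤ U l') := Nat.find_min hex hl
    push_neg at hnl
    obtain ⟨l', hl'n, hl'⟩ := hnl (lt_trans hl hj₀n)
    exact lt_of_le_of_lt (hj₀min l' hl'n) hl'
  refine ⟨j₀, ⟨hj₀n, ?_⟩, ?_⟩
  · intro k hk hkn
    rcases lt_or_ge (j₀ + k) n with h | h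
    · have h0 : U j₀ ≤ U (j₀ + k) := hj₀min _ h
      exact key j₀ k hk hkn (by push_cast; omega)
    · have hl : j₀ + k - n < j₀ := by omega
      have heq : U (j₀ + k) = U (j₀ + k - n) := by
        rw [← hper (j₀ + k - n)]; congr 1; omega
      have h1 : U j₀ < U (j₀ + k) := heq ▸ hleast _ hl
      exact key j₀ k hk hkn (by push_cast; omega)
  · -- uniqueness
    rintro j ⟨hjn, hjw⟩
    by_contra hne
    -- two distinct window points j and j₀, both < n
    have hwj₀ : ∀ k, 0 < k → k < n → U j₀ + k ≤ U (j₀ + k) := by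
      intro k hk hkn
      rcases lt_or_ge (j₀ + k) n with h | h
      · exact key j₀ k hk hkn (by have := hj₀min _ h; push_cast; omega)
      · have hl : j₀ + k - n < j₀ := by omega
        have heq : U (j₀ + k) = U (j₀ + k - n) := by
          rw [← hper (j₀ + k - n)]; congr 1; omega
        have h1 : U j₀ < U (j₀ + k) := heq ▸ hleast _ hl
        exact key j₀ k hk hkn (by push_cast; omega)
    -- wlog via symmetric argument
    have main : ∀ a b : ℕ, a < b → b < n →
        (∀ k, 0 < k → k < n → U a + k ≤ U (a + k)) →
        (∀ k, 0 < k → k < n → U b + k ≤ U (b + k)) → False := by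
      intro a b hab hbn ha hb
      have h1 : U a + (b - a : ℕ) ≤ U b := by
        have := ha (b - a) (by omega) (by omega)
        rwa [show a + (b - a) = b by omega] at this
      have h2 : U b + (n - (b - a) : ℕ) ≤ U (b + (n - (b - a))) := hb _ (by omega) (by omega)
      have heq : U (b + (n - (b - a))) = U a := by
        rw [show b + (n - (b-a)) = a + n by omega, hper]
      rw [heq] at h2
      have hc : ((b - a : ℕ) : ℤ) + ((n - (b-a) : ℕ) : ℤ) = (n : ℤ) := by push_cast; omega
      have hn' : (0:ℤ) < n := by exact_mod_cast hn
      linarith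
    rcases lt_or_gt_of_ne hne with h | h
    · exact main j j₀ h hj₀n hjw hwj₀
    · exact main j₀ j h hjn hwj₀ hjw

section core
variable (m n : ℕ) (x : Fin n → ℕ)

/-- the `j`-th lift -/
def dd (j : ℕ) (i : Fin n) : ℕ := (x i + j * m) % (m * n)

def Ssum (j : ℕ) : ℤ := ∑ i, (dd m n x j i : ℤ)

def Tt (j : ℕ) : ℤ := Ssum m n x j - gZ m n

def sig (j k : ℕ) : ℤ :=
  m * Tri k - ∑ i, max ((dd m n x j i : ℤ) - m * ((n - k : ℕ) : ℤ) + 1) 0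

def ff (v : ℕ) : ℤ := n * v * ((v:ℤ) + 2 - m * n)

def Zz (j : ℕ) : ℤ := (∑ i, ff m n (dd m n x j i)) - 2 * (m*n) * j

def Uu (j : ℕ) : ℤ := j + ∑ l ∈ Finset.range j, (n * sig m n x l 1 + Tt m n x l)

/-- break divisor condition, in `Tri` form -/
def BreakT (j : ℕ) : Prop :=
  Ssum m n x j = gZ m n ∧
  ∀ S : Finset (Fin n), S.Nonempty →
    (m:ℤ) * Tri S.card - S.card + 1 ≤ ∑ i ∈ S, (dd m n x j i : ℤ)

variable {m n x}

lemma Npos (hm : 0 < m) (hn : 2 ≤ n) : 0 < m * n := Nat.mul_pos hm (by omega)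

variable (hm : 0 < m) (hn : 2 ≤ n)

set_option linter.unusedSectionVars false

include hm hn

lemma dd_lt (j : ℕ) (i : Fin n) : dd m n x j i < m * n := Nat.mod_lt _ (Npos hm hn)

lemma dd_add (j k : ℕ) (i : Fin n) : dd m n x (j+k) i = (dd m n x j i + k * m) % (m * n) := by
  unfold dd
  rw [Nat.mod_add_mod]
  congr 1
  ring

lemma dd_per (j : ℕ) (i : Fin n) : dd m n x (j + n) i = dd m n x j i := by
  unfold dd
  rw [show x i + (j + n) * m = (x i + j * m) + (m*n) by ring, Nat.add_mod_right]

lemma dd_step (j k : ℕ) (hk : k ≤ n) (i : Fin n) :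
    (dd m n x (j+k) i = dd m n x j i + k*m ∧ dd m n x j i + k*m < m*n) ∨
    (dd m n x (j+k) i + m*n = dd m n x j i + k*m ∧ m*n ≤ dd m n x j i + k*m) := by
  have h1 := dd_lt hm hn j i (x := x)
  have h2 : k * m ≤ m * n := by
    calc k * m ≤ n * m := Nat.mul_le_mul_right _ hk
    _ = m * n := Nat.mul_comm _ _
  rw [dd_add hm hn]
  rcases lt_or_ge (dd m n x j i + k*m) (m*n) with h | h
  · left; exact ⟨Nat.mod_eq_of_lt h, h⟩
  · right
    constructor
    · rw [Nat.mod_eq_sub_mod h, Nat.mod_eq_of_lt (by omega)]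
      omega
    · exact h

lemma key_i (j k : ℕ) (hk : k < n) (i : Fin n) :
    ff m n (dd m n x (j+k) i) - ff m n (dd m n x j i)
      + 2*(m*n)*n * max ((dd m n x j i : ℤ) - m * ((n - k : ℕ) : ℤ) + 1) 0
      - 2*(m*n)*k*(dd m n x j i : ℤ)
    = n * (m*k) * ((m:ℤ)*k - m*n + 2) := by
  have hnk : ((n - k : ℕ) : ℤ) = (n:ℤ) - k := by
    push_cast [Nat.cast_sub hk.le]; ring
  rcases dd_step hm hn j k hk.le i with ⟨he, hlt⟩ | ⟨he, hge⟩
  · have hmax : max ((dd m n x j i : ℤ) - m * ((n - k : ℕ) : ℤ) + 1) 0 = 0 := by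
      apply max_eq_right
      rw [hnk]
      have : (dd m n x j i : ℤ) + k * m < m * n := by exact_mod_cast hlt
      nlinarith
    rw [he, hmax]
    unfold ff
    push_cast
    ring
  · have hdval : (dd m n x (j+k) i : ℤ) = (dd m n x j i : ℤ) + k*m - m*n := by
      zify at he
      linarith
    have hmax : max ((dd m n x j i : ℤ) - m * ((n - k : ℕ) : ℤ) + 1) 0
        = (dd m n x j i : ℤ) - m * ((n - k : ℕ) : ℤ) + 1 := by
      apply max_eq_left
      rw [hnk]
      have : (m*n : ℤ) ≤ (dd m n x j i : ℤ) + k * m := by exact_mod_cast hge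
      nlinarith
    rw [hmax]
    unfold ff
    rw [hdval, hnk]
    push_cast
    ring

lemma scalar_id (k : ℕ) :
    (n:ℤ) * ((n:ℤ) * (m*k) * ((m:ℤ)*k - m*n + 2)) - 2*((m:ℤ)*n)*k
      = 2*((m:ℤ)*n)*n*(m * Tri k) - 2*((m:ℤ)*n)*k*(gZ m n) := by
  unfold gZ
  linear_combination (-(m:ℤ)^2*n^2) * two_tri k + ((m:ℤ)^2*n*k) * two_tri n

lemma Zdiff (j k : ℕ) (hk : k < n) :
    Zz m n x (j+k) - Zz m n x j = 2*((m:ℤ)*n) * ((n:ℤ) * sig m n x j k + k * Tt m n x j) := by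
  have hsum : ∀ i ∈ Finset.univ, ff m n (dd m n x (j+k) i) - ff m n (dd m n x j i) =
      (n:ℤ) * (m*k) * ((m:ℤ)*k - m*n + 2)
      - 2*(m*n)*n * max ((dd m n x j i : ℤ) - m * ((n - k : ℕ) : ℤ) + 1) 0
      + 2*(m*n)*k*(dd m n x j i : ℤ) := by
    intro i _
    have := key_i (x := x) hm hn j k hk i
    linarith
  have h1 : ∑ i, (ff m n (dd m n x (j+k) i) - ff m n (dd m n x j i)) =
      (n:ℤ) * ((n:ℤ) * (m*k) * ((m:ℤ)*k - m*n + 2))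
      - 2*(m*n)*n * (∑ i, max ((dd m n x j i : ℤ) - m * ((n - k : ℕ) : ℤ) + 1) 0)
      + 2*(m*n)*k * Ssum m n x j := by
    rw [Finset.sum_congr rfl hsum]
    rw [Finset.sum_add_distrib, Finset.sum_sub_distrib, Finset.sum_const]
    simp only [Finset.card_univ, Fintype.card_fin, ← Finset.mul_sum]
    unfold Ssum
    push_cast
    ring
  have h2 : Zz m n x (j+k) - Zz m n x j =
      (∑ i, (ff m n (dd m n x (j+k) i) - ff m n (dd m n x j i))) - 2*((m:ℤ)*n)*k := by
    unfold Zz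
    rw [Finset.sum_sub_distrib]
    push_cast
    ring
  rw [h2, h1]
  unfold sig Tt
  have hs := scalar_id (m := m) (n := n) hm hn k
  linarith [hs]

omit hm hn in
lemma T_dvd (hx : ((m*n : ℕ):ℤ) ∣ (∑ i, (x i : ℤ)) - gZ m n) (j : ℕ) :
    ((m*n : ℕ):ℤ) ∣ Tt m n x j := by
  have hi : ∀ i ∈ Finset.univ, (dd m n x j i : ℤ)
      = ((x i : ℤ) + j*m) - (m*n) * (((x i + j*m)/(m*n) : ℕ) : ℤ) := by
    intro i _
    have h := Nat.mod_add_div (x i + j*m) (m*n)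
    unfold dd
    zify at h ⊢
    linarith
  have e : Tt m n x j = ((∑ i, (x i:ℤ)) - gZ m n) + (m*n) * j
      - (m*n) * (∑ i, (((x i + j*m)/(m*n) : ℕ):ℤ)) := by
    unfold Tt Ssum
    rw [Finset.sum_congr rfl hi, Finset.sum_sub_distrib, Finset.sum_add_distrib,
      Finset.sum_const, ← Finset.mul_sum]
    simp only [Finset.card_univ, Fintype.card_fin]
    push_cast
    ring
  rw [e]
  obtain ⟨c, hc⟩ := hx
  refine ⟨c + j - (∑ i, (((x i + j*m)/(m*n) : ℕ):ℤ)), ?_⟩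
  push_cast at hc ⊢
  linear_combination hc

omit hm hn in
lemma Uinc (j : ℕ) :
    Uu m n x (j+1) = Uu m n x j + ((n:ℤ) * sig m n x j 1 + Tt m n x j) + 1 := by
  unfold Uu
  rw [Finset.sum_range_succ]
  push_cast
  ring

lemma UZ (j : ℕ) : 2*((m:ℤ)*n) * Uu m n x j = Zz m n x j - Zz m n x 0 + 2*((m:ℤ)*n)*j := by
  induction j with
  | zero => simp [Uu]
  | succ t ih =>
    have h1 := Zdiff (x := x) hm hn t 1 (by omega)
    have h2 := Uinc (m := m) (x := x) t
    have e1 : t + 1 = t + 1 := rfl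
    rw [h2]
    push_cast
    push_cast at h1 ih
    nlinarith [h1, ih]

lemma Uwin (j k : ℕ) (hk : k < n) :
    Uu m n x (j+k) - Uu m n x j - k = (n:ℤ) * sig m n x j k + k * Tt m n x j := by
  have h1 := UZ (x := x) hm hn (j+k)
  have h2 := UZ (x := x) hm hn j
  have h3 := Zdiff (x := x) hm hn j k hk
  have hc : (2*((m:ℤ)*n)) ≠ 0 := by
    have h0 : (0:ℤ) < m := by exact_mod_cast hm
    have h0' : (0:ℤ) < n := by exact_mod_cast (by omega : 0 < n)
    positivity
  apply mul_left_cancel₀ hc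
  push_cast at h1 h2 h3 ⊢
  nlinarith [h1, h2, h3]

lemma Zper (j : ℕ) : Zz m n x (j+n) = Zz m n x j - 2*((m:ℤ)*n)*n := by
  unfold Zz
  rw [Finset.sum_congr rfl (fun i _ => by rw [dd_per hm hn])]
  push_cast
  ring

lemma Uper (j : ℕ) : Uu m n x (j + n) = Uu m n x j := by
  have h1 := UZ (x := x) hm hn (j+n)
  have h2 := UZ (x := x) hm hn j
  have h3 := Zper (x := x) hm hn j
  have hc : (2*((m:ℤ)*n)) ≠ 0 := by
    have h0 : (0:ℤ) < m := by exact_mod_cast hm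
    have h0' : (0:ℤ) < n := by exact_mod_cast (by omega : 0 < n)
    positivity
  apply mul_left_cancel₀ hc
  push_cast at h1 h2 h3 ⊢
  nlinarith [h1, h2, h3]

lemma Ustep (hx : ((m*n : ℕ):ℤ) ∣ (∑ i, (x i : ℤ)) - gZ m n) (j : ℕ) :
    (n:ℤ) ∣ Uu m n x (j+1) - Uu m n x j - 1 := by
  rw [Uinc (m := m)]
  have h1 : (n:ℤ) ∣ Tt m n x j := by
    have h2 := T_dvd (x := x) hx j
    exact dvd_trans ⟨m, by push_cast; ring⟩ h2
  obtain ⟨c, hc⟩ := h1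
  exact ⟨sig m n x j 1 + c, by rw [hc]; ring⟩

omit hm hn in
lemma sig1_nonpos (j : ℕ) : sig m n x j 1 ≤ 0 := by
  unfold sig
  have h1 : Tri 1 = 0 := by unfold Tri; norm_num
  rw [h1]
  have h2 : 0 ≤ ∑ i, max ((dd m n x j i : ℤ) - m * ((n - 1 : ℕ) : ℤ) + 1) 0 :=
    Finset.sum_nonneg fun i _ => le_max_right _ 0
  linarith

omit hm in
lemma signm1_le (j : ℕ) : sig m n x j (n-1) ≤ (m:ℤ) - 1 - Tt m n x j := by
  unfold sig Tt
  have hsub : n - (n-1) = 1 := by omega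
  rw [hsub]
  have h2 : ∑ i, ((dd m n x j i : ℤ) - m * ((1:ℕ):ℤ) + 1)
      ≤ ∑ i, max ((dd m n x j i : ℤ) - m * ((1:ℕ):ℤ) + 1) 0 :=
    Finset.sum_le_sum fun i _ => le_max_left _ 0
  have h3 : ∑ i, ((dd m n x j i : ℤ) - m * ((1:ℕ):ℤ) + 1)
      = Ssum m n x j - n * ((m:ℤ) - 1) := by
    unfold Ssum
    rw [Finset.sum_add_distrib, Finset.sum_sub_distrib, Finset.sum_const, Finset.sum_const]
    simp only [Finset.card_univ, Fintype.card_fin]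
    push_cast
    ring
  rw [h3] at h2
  have t1 := two_tri (n-1)
  rw [Nat.cast_sub (by omega : 1 ≤ n)] at t1
  have t2 := two_tri n
  have hkey2 : 2*((m:ℤ)*Tri (n-1)) + 2*((n:ℤ)*((m:ℤ)-1)) - 2*((m:ℤ)*Tri n - n + 1)
      = 2*((m:ℤ) - 1) := by
    linear_combination (m:ℤ)*t1 - (m:ℤ)*t2
  unfold gZ
  push_cast
  push_cast at h2
  linarith [h2, hkey2]

lemma win_T_eq_zero (hx : ((m*n : ℕ):ℤ) ∣ (∑ i, (x i : ℤ)) - gZ m n) (j : ℕ)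
    (hw : ∀ k, 0 < k → k < n → 0 ≤ (n:ℤ) * sig m n x j k + k * Tt m n x j) :
    Tt m n x j = 0 := by
  have h1 := hw 1 one_pos (by omega)
  have hs1 := sig1_nonpos (m := m) (x := x) j
  have hn0 : (0:ℤ) < n := by exact_mod_cast (by omega : 0 < n)
  have hm0 : (1:ℤ) ≤ m := by exact_mod_cast hm
  have hT0 : 0 ≤ Tt m n x j := by
    push_cast at h1
    nlinarith [h1, hs1]
  have h2 := hw (n-1) (by omega) (by omega)
  have hs2 := signm1_le (m := m) (x := x) hn j
  rw [Nat.cast_sub (by omega : 1 ≤ n)] at h2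
  push_cast at h2
  have hTle : Tt m n x j ≤ (n:ℤ)*((m:ℤ)-1) := by nlinarith [h2, hs2]
  have hdvd := T_dvd (x := x) hx j
  apply Int.eq_zero_of_abs_lt_dvd hdvd
  rw [abs_of_nonneg hT0]
  push_cast
  nlinarith [hTle]

/-- break ⇒ threshold conditions -/
lemma breakT_to_sig (j : ℕ) (hb : BreakT m n x j) :
    Tt m n x j = 0 ∧ ∀ k, 0 < k → k < n → 0 ≤ sig m n x j k := by
  obtain ⟨hsum, hsub⟩ := hb
  have hT : Tt m n x j = 0 := by unfold Tt; rw [hsum]; ring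
  refine ⟨hT, fun k hk hkn => ?_⟩
  classical
  set θ : ℕ := m * (n - k) with hθ
  set S : Finset (Fin n) := Finset.univ.filter (fun i => θ ≤ dd m n x j i) with hS
  set s : ℕ := S.card with hs
  have hθc : ((θ:ℕ):ℤ) = (m:ℤ) * ((n-k:ℕ):ℤ) := by rw [hθ]; push_cast; ring
  -- split the max-sum
  have hsplit : ∑ i, max ((dd m n x j i : ℤ) - m * ((n - k : ℕ) : ℤ) + 1) 0
      = (∑ i ∈ S, (dd m n x j i : ℤ)) - s * ((m:ℤ) * ((n-k:ℕ):ℤ)) + s := by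
    rw [← Finset.sum_filter_add_sum_filter_not Finset.univ (fun i => θ ≤ dd m n x j i)]
    have e1 : ∀ i ∈ Finset.univ.filter (fun i => θ ≤ dd m n x j i),
        max ((dd m n x j i : ℤ) - m * ((n - k : ℕ) : ℤ) + 1) 0
          = (dd m n x j i : ℤ) - m * ((n - k : ℕ) : ℤ) + 1 := by
      intro i hi
      rw [Finset.mem_filter] at hi
      apply max_eq_left
      have : (θ:ℤ) ≤ (dd m n x j i : ℤ) := by exact_mod_cast hi.2
      rw [hθc] at this
      linarith
    have e2 : ∀ i ∈ Finset.univ.filter (fun i => ¬ θ ≤ dd m n x j i),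
        max ((dd m n x j i : ℤ) - m * ((n - k : ℕ) : ℤ) + 1) 0 = 0 := by
      intro i hi
      rw [Finset.mem_filter] at hi
      apply max_eq_right
      have : (dd m n x j i : ℤ) < (θ:ℤ) := by exact_mod_cast (by omega : dd m n x j i < θ)
      rw [hθc] at this
      linarith
    rw [Finset.sum_congr rfl e1, Finset.sum_congr rfl e2, Finset.sum_const, smul_zero, add_zero,
      Finset.sum_add_distrib, Finset.sum_sub_distrib, Finset.sum_const, Finset.sum_const]
    rw [← hS, ← hs]
    push_cast
    ring
  have hslen : s ≤ n := by
    rw [hs]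
    calc S.card ≤ Finset.univ.card := Finset.card_le_univ S
    _ = n := by simp
  unfold sig
  rw [hsplit]
  have hcast_t : ((n - k : ℕ) : ℤ) = (n:ℤ) - k := by
    rw [Nat.cast_sub hkn.le]
  have t1 := two_tri k
  have t2 := two_tri n
  have hm1 : (1:ℤ) ≤ m := by exact_mod_cast hm
  have hnk1 : (1:ℤ) ≤ (n:ℤ) - k := by
    have h9 : k + 1 ≤ n := hkn
    have h9' : ((k:ℤ)) + 1 ≤ n := by exact_mod_cast h9
    linarith
  rcases eq_or_lt_of_le hslen with hsn | hsn
  · -- S = univ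
    have hSuniv : S = Finset.univ := Finset.eq_univ_of_card S (by simp [← hs, hsn])
    have hsum' : (∑ i ∈ S, (dd m n x j i : ℤ)) = gZ m n := by rw [hSuniv]; exact hsum
    rw [hsum', hsn, hcast_t]
    have hkey : 2*((m:ℤ)*Tri k) - 2*(gZ m n) + 2*(n:ℤ)*((m:ℤ)*((n:ℤ)-k)) - 2*(n:ℤ)
        = (m:ℤ)*(((n:ℤ)-k)*((n:ℤ)-k) + ((n:ℤ)-k)) - 2 := by
      unfold gZ
      linear_combination (m:ℤ)*t1 - (m:ℤ)*t2
    have hbig : 0 ≤ (m:ℤ)*(((n:ℤ)-k)*((n:ℤ)-k) + ((n:ℤ)-k)) - 2 := by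
      have h5 : (1:ℤ)*2 ≤ (m:ℤ)*(((n:ℤ)-k)*((n:ℤ)-k) + ((n:ℤ)-k)) := by
        apply mul_le_mul hm1 (by nlinarith [hnk1]) (by norm_num) (by linarith)
      linarith
    linarith [hkey, hbig]
  · -- s < n : use the break condition on the complement
    set Sc : Finset (Fin n) := Finset.univ.filter (fun i => ¬ θ ≤ dd m n x j i) with hSc
    have hcards : s + Sc.card = n := by
      rw [hs, hSc]
      rw [Finset.card_filter_add_card_filter_not]
      simp
    have htpos : Sc.Nonempty := by
      rw [← Finset.card_pos]
      omega
    have hbreak := hsub Sc htpos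
    have hsplitsum : (∑ i ∈ S, (dd m n x j i : ℤ)) + (∑ i ∈ Sc, (dd m n x j i : ℤ))
        = gZ m n := by
      have h7 := Finset.sum_filter_add_sum_filter_not Finset.univ
        (fun i => θ ≤ dd m n x j i) (fun i => (dd m n x j i : ℤ))
      rw [hS, hSc, h7]
      exact hsum
    set t : ℕ := Sc.card with ht
    have hcast_s : ((t:ℕ):ℤ) = (n:ℤ) - s := by
      have : s + t = n := hcards
      push_cast [← this]
      ring
    -- Σ_S d ≤ gZ − (m Tri t − t + 1)
    have hSle : (∑ i ∈ S, (dd m n x j i : ℤ)) ≤ gZ m n - ((m:ℤ) * Tri t - t + 1) := by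
      linarith [hbreak, hsplitsum]
    have t3 := two_tri t
    have hprod : 0 ≤ ((k:ℤ) - s) * ((k:ℤ) - s - 1) := by
      rcases le_or_gt ((k:ℤ) - s) 0 with h | h
      · nlinarith [mul_nonneg (neg_nonneg.mpr h) (neg_nonneg.mpr (by linarith : ((k:ℤ) - s - 1) ≤ 0))]
      · have h8 : (1:ℤ) ≤ (k:ℤ) - s := h
        exact mul_nonneg (by linarith) (by linarith)
    rw [hcast_t]
    rw [hcast_s] at t3 hSle
    have hkey : 2*((m:ℤ)*Tri k) - 2*(gZ m n - ((m:ℤ)*Tri t - ((n:ℤ)-s) + 1)) + 2*(s:ℤ)*((m:ℤ)*((n:ℤ)-k)) - 2*(s:ℤ)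
        = (m:ℤ)*(((k:ℤ) - s) * ((k:ℤ) - s - 1)) := by
      unfold gZ
      linear_combination (m:ℤ)*t1 + (m:ℤ)*t3 - (m:ℤ)*t2
    have hbig : 0 ≤ (m:ℤ)*(((k:ℤ) - s) * ((k:ℤ) - s - 1)) :=
      mul_nonneg (by linarith) hprod
    linarith [hSle, hkey, hbig]

/-- threshold conditions ⇒ break -/
lemma sig_to_breakT (j : ℕ) (hT : Tt m n x j = 0)
    (hsig : ∀ k, 0 < k → k < n → 0 ≤ sig m n x j k) : BreakT m n x j := by
  have hsum : Ssum m n x j = gZ m n := by unfold Tt at hT; linarith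
  refine ⟨hsum, fun S hSne => ?_⟩
  classical
  set s : ℕ := S.card with hs
  have hs1 : 1 ≤ s := Finset.card_pos.mpr hSne
  have hslen : s ≤ n := by
    calc S.card ≤ Finset.univ.card := Finset.card_le_univ S
    _ = n := by simp
  rcases eq_or_lt_of_le hslen with hsn | hsn
  · have hSuniv : S = Finset.univ := Finset.eq_univ_of_card S (by simp [← hs, hsn])
    rw [hSuniv, hsn]
    have h4 : ∑ i ∈ Finset.univ, (dd m n x j i : ℤ) = gZ m n := hsum
    rw [h4]
    exact le_of_eq (by unfold gZ; ring)
  · set t : ℕ := n - s with ht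
    have htpos : 0 < t := by omega
    have htn : t < n := by omega
    have hσ := hsig t htpos htn
    have hnt : n - t = s := by omega
    -- bound the complement sum
    have hcardc : Sᶜ.card = t := by
      rw [Finset.card_compl]
      simp [← hs, ht]
    have hperel : ∀ i ∈ Sᶜ, (dd m n x j i : ℤ)
        ≤ ((m:ℤ) * ((n - t : ℕ):ℤ) - 1) + max ((dd m n x j i : ℤ) - m * ((n - t : ℕ) : ℤ) + 1) 0 := by
      intro i _
      have := le_max_left ((dd m n x j i : ℤ) - m * ((n - t : ℕ) : ℤ) + 1) 0
      linarith
    have hcle : (∑ i ∈ Sᶜ, (dd m n x j i : ℤ))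
        ≤ t * ((m:ℤ) * ((n - t : ℕ):ℤ) - 1) + ∑ i, max ((dd m n x j i : ℤ) - m * ((n - t : ℕ) : ℤ) + 1) 0 := by
      calc (∑ i ∈ Sᶜ, (dd m n x j i : ℤ))
          ≤ ∑ i ∈ Sᶜ, (((m:ℤ) * ((n - t : ℕ):ℤ) - 1) + max ((dd m n x j i : ℤ) - m * ((n - t : ℕ) : ℤ) + 1) 0) :=
            Finset.sum_le_sum hperel
        _ = Sᶜ.card * ((m:ℤ) * ((n - t : ℕ):ℤ) - 1) + ∑ i ∈ Sᶜ, max ((dd m n x j i : ℤ) - m * ((n - t : ℕ) : ℤ) + 1) 0 := by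
            rw [Finset.sum_add_distrib, Finset.sum_const]
            push_cast
            ring
        _ ≤ t * ((m:ℤ) * ((n - t : ℕ):ℤ) - 1) + ∑ i, max ((dd m n x j i : ℤ) - m * ((n - t : ℕ) : ℤ) + 1) 0 := by
            rw [hcardc]
            have h1 : (∑ i ∈ Sᶜ, max ((dd m n x j i : ℤ) - m * ((n - t : ℕ) : ℤ) + 1) 0)
                ≤ ∑ i, max ((dd m n x j i : ℤ) - m * ((n - t : ℕ) : ℤ) + 1) 0 :=
              Finset.sum_le_sum_of_subset_of_nonneg (Finset.subset_univ _)
                (fun i _ _ => le_max_right _ 0)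
            linarith
    have hmaxle : ∑ i, max ((dd m n x j i : ℤ) - m * ((n - t : ℕ) : ℤ) + 1) 0 ≤ (m:ℤ) * Tri t := by
      unfold sig at hσ
      linarith
    have hsplitsum : (∑ i ∈ S, (dd m n x j i : ℤ)) + (∑ i ∈ Sᶜ, (dd m n x j i : ℤ)) = gZ m n := by
      rw [Finset.sum_add_sum_compl]
      exact hsum
    -- final arithmetic
    have t1 := two_tri s
    have t2 := two_tri n
    have t3 := two_tri t
    have hcast1 : ((n - t : ℕ):ℤ) = (s:ℤ) := by rw [hnt]
    have hcast2 : ((t:ℕ):ℤ) = (n:ℤ) - s := by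
      rw [ht, Nat.cast_sub hslen]
    rw [hcast1] at hcle
    rw [hcast1] at hmaxle
    rw [hcast2] at t3 hcle
    have hkey3 : 2*(gZ m n) - 2*(((n:ℤ)-s)*((m:ℤ)*(s:ℤ)-1)) - 2*((m:ℤ)*Tri t)
        = 2*((m:ℤ)*Tri s - (s:ℤ) + 1) := by
      unfold gZ
      linear_combination (m:ℤ)*t2 - (m:ℤ)*t3 - (m:ℤ)*t1
    linarith [hcle, hmaxle, hsplitsum, hkey3]


lemma breakT_iff_win (hx : ((m*n : ℕ):ℤ) ∣ (∑ i, (x i : ℤ)) - gZ m n) (j : ℕ) :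
    BreakT m n x j ↔ ∀ k, 0 < k → k < n → 0 ≤ (n:ℤ) * sig m n x j k + k * Tt m n x j := by
  have hn0 : (0:ℤ) < n := by exact_mod_cast (by omega : 0 < n)
  constructor
  · intro hb k hk hkn
    obtain ⟨hT, hσ⟩ := breakT_to_sig (x := x) hm hn j hb
    have h1 := hσ k hk hkn
    rw [hT]
    have h2 : 0 ≤ (n:ℤ) * sig m n x j k := mul_nonneg (by linarith) h1
    linarith
  · intro hw
    have hT := win_T_eq_zero (x := x) hm hn hx j hw
    apply sig_to_breakT (x := x) hm hn j hT
    intro k hk hkn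
    have h1 := hw k hk hkn
    rw [hT, mul_zero, add_zero] at h1
    by_contra hneg
    push_neg at hneg
    have h2 : (n:ℤ) * sig m n x j k < 0 := mul_neg_of_pos_of_neg hn0 hneg
    linarith

theorem core_exists_unique (hx : ((m*n : ℕ):ℤ) ∣ (∑ i, (x i : ℤ)) - gZ m n) :
    ∃! j : ℕ, j < n ∧ BreakT m n x j := by
  have hw := window_lemma n (by omega) (Uu m n x) (Uper (x := x) hm hn)
    (Ustep (x := x) hm hn hx)
  have hiff : ∀ j, (∀ k, 0 < k → k < n → Uu m n x j + k ≤ Uu m n x (j + k)) ↔ BreakT m n x j := by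
    intro j
    rw [breakT_iff_win (x := x) hm hn hx j]
    constructor
    · intro h k hk hkn
      have h1 := h k hk hkn
      have h2 := Uwin (x := x) hm hn j k hkn
      linarith
    · intro h k hk hkn
      have h1 := h k hk hkn
      have h2 := Uwin (x := x) hm hn j k hkn
      linarith
  obtain ⟨j₀, hj₀, huniq⟩ := hw
  exact ⟨j₀, ⟨hj₀.1, (hiff j₀).mp hj₀.2⟩, fun j hj => huniq j ⟨hj.1, (hiff j).mpr hj.2⟩⟩

omit hm hn in
lemma breakT_iff_isBreak (j : ℕ) : BreakT m n x j ↔ IsBreakDivisor m n (dd m n x j) := by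
  rw [isBreak_iff]
  unfold BreakT Ssum
  rfl

end core

/-- every coordinate of a break divisor is `< m*n` -/
lemma break_lt {m n : ℕ} (hm : 0 < m) (hn : 2 ≤ n) (d : Fin n → ℕ)
    (hd : IsBreakDivisor m n d) (i : Fin n) : d i < m * n := by
  rw [isBreak_iff] at hd
  obtain ⟨hsum, hsub⟩ := hd
  classical
  set S : Finset (Fin n) := Finset.univ.erase i with hS
  have hcard : S.card = n - 1 := by
    rw [hS, Finset.card_erase_of_mem (Finset.mem_univ i)]
    simp
  have hne : S.Nonempty := by
    rw [← Finset.card_pos, hcard]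
    omega
  have hb := hsub S hne
  rw [hcard] at hb
  have hsplit : (∑ j ∈ S, (d j : ℤ)) + (d i : ℤ) = gZ m n := by
    rw [hS, Finset.sum_erase_add Finset.univ _ (Finset.mem_univ i)]
    exact hsum
  have t1 := two_tri (n-1)
  have t2 := two_tri n
  have hc : ((n-1 : ℕ):ℤ) = (n:ℤ) - 1 := by
    rw [Nat.cast_sub (by omega : 1 ≤ n)]
    norm_num
  rw [hc] at hb t1
  have hkey : 2*(gZ m n) - 2*((m:ℤ)*Tri (n-1) - ((n:ℤ)-1) + 1)
      = 2*((m:ℤ)*((n:ℤ)-1) - 1) := by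
    unfold gZ
    linear_combination (m:ℤ)*t2 - (m:ℤ)*t1
  have hlt : (d i : ℤ) < (m:ℤ)*n := by
    have hm1 : (1:ℤ) ≤ m := by exact_mod_cast hm
    nlinarith [hb, hsplit, hkey, hm1]
  exact_mod_cast hlt

theorem numBreakDivisors' (m n : ℕ) (hm : 0 < m) (hn : 2 ≤ n) :
    Nat.card {d : Fin n → ℕ // IsBreakDivisor m n d} = m ^ (n - 1) * n ^ (n - 2) := by
  classical
  obtain ⟨n₁, rfl⟩ : ∃ n₁, n = n₁ + 1 := ⟨n - 1, by omega⟩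
  haveI : NeZero (m * (n₁+1)) := ⟨by positivity⟩
  have hcast_mod : ∀ a : ℕ, ((a % (m*(n₁+1)) : ℕ) : ZMod (m*(n₁+1))) = (a : ZMod (m*(n₁+1))) := by
    intro a
    conv_rhs => rw [← Nat.mod_add_div a (m*(n₁+1))]
    rw [Nat.cast_add, Nat.cast_mul, ZMod.natCast_self, zero_mul, add_zero]
  have hdvd : ∀ x : Fin (n₁+1) → ZMod (m*(n₁+1)), (∑ i, x i) = ((gZ m (n₁+1) : ℤ) : ZMod (m*(n₁+1))) →
      ((m*(n₁+1) : ℕ):ℤ) ∣ (∑ i, ((x i).val : ℤ)) - gZ m (n₁+1) := by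
    intro x hx
    have h1 : ((∑ i, (x i).val : ℕ) : ZMod (m*(n₁+1))) = ((gZ m (n₁+1) : ℤ) : ZMod (m*(n₁+1))) := by
      push_cast
      have h0 : ∀ i, (((x i).val : ℕ) : ZMod (m*(n₁+1))) = x i := fun i => by
        rw [ZMod.natCast_val, ZMod.cast_id]
      rw [Finset.sum_congr rfl (fun i _ => h0 i)]
      exact hx
    have h2 : (((∑ i, (x i).val : ℕ) : ℤ) : ZMod (m*(n₁+1))) = ((gZ m (n₁+1) : ℤ) : ZMod (m*(n₁+1))) := by
      rw [Int.cast_natCast]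
      exact h1
    have h3 := (ZMod.intCast_eq_intCast_iff _ _ _).mp h2
    have h4 := Int.ModEq.dvd h3
    have h6 := Int.dvd_neg.mpr h4
    rw [neg_sub] at h6
    have h5 : ((∑ i, (x i).val : ℕ) : ℤ) = ∑ i, ((x i).val : ℤ) := by push_cast; rfl
    rw [h5] at h6
    exact_mod_cast h6
  -- the lift recovery lemma
  have hlift : ∀ (x : Fin (n₁+1) → ZMod (m*(n₁+1))) (e : Fin (n₁+1) → ℕ), IsBreakDivisor m (n₁+1) e → ∀ l : ℕ,
      (∀ i, x i = (e i : ZMod (m*(n₁+1))) - ((l * m : ℕ) : ZMod (m*(n₁+1)))) →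
      dd m (n₁+1) (fun i => (x i).val) l = e := by
    intro x e he l hrel
    funext i
    have h1 : (((x i).val + l * m : ℕ) : ZMod (m*(n₁+1))) = (e i : ZMod (m*(n₁+1))) := by
      push_cast
      rw [ZMod.natCast_val, ZMod.cast_id, hrel i]
      push_cast
      ring
    have h2 : dd m (n₁+1) (fun i => (x i).val) l i = ((x i).val + l * m) % (m*(n₁+1)) := rfl
    rw [h2, ← ZMod.val_natCast (n := m*(n₁+1)) ((x i).val + l * m), h1,
      ZMod.val_cast_of_lt (break_lt hm hn e he i)]
  -- the bijection
  have hFsum : ∀ (d : Fin (n₁+1) → ℕ), IsBreakDivisor m (n₁+1) d → ∀ (j : Fin (n₁+1)),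
      (∑ i, ((d i : ZMod (m*(n₁+1))) - ((j.1 * m : ℕ) : ZMod (m*(n₁+1))))) = ((gZ m (n₁+1) : ℤ) : ZMod (m*(n₁+1))) := by
    intro d hd j
    rw [Finset.sum_sub_distrib, Finset.sum_const]
    have h1 : (∑ i, (d i : ZMod (m*(n₁+1)))) = ((gZ m (n₁+1) : ℤ) : ZMod (m*(n₁+1))) := by
      have h0 := hd.1
      rw [genusZ_eq] at h0
      have h7 : ((∑ i, (d i : ℤ) : ℤ) : ZMod (m*(n₁+1))) = ((gZ m (n₁+1) : ℤ) : ZMod (m*(n₁+1))) := by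
        rw [h0]
      rw [← h7]
      push_cast
      rfl
    rw [h1]
    have h2 : ((Finset.univ : Finset (Fin (n₁+1))).card : ℕ) • ((j.1 * m : ℕ) : ZMod (m*(n₁+1))) = 0 := by
      simp only [Finset.card_univ, Fintype.card_fin, nsmul_eq_mul]
      rw [← Nat.cast_mul, show (n₁+1) * (j.1 * m) = j.1 * (m*(n₁+1)) by ring, Nat.cast_mul,
        ZMod.natCast_self, mul_zero]
    rw [h2]
    ring
  let F : {d : Fin (n₁+1) → ℕ // IsBreakDivisor m (n₁+1) d} × Fin (n₁+1) →
      {x : Fin (n₁+1) → ZMod (m*(n₁+1)) // ∑ i, x i = ((gZ m (n₁+1) : ℤ) : ZMod (m*(n₁+1)))} := fun p =>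
    ⟨fun i => (p.1.1 i : ZMod (m*(n₁+1))) - ((p.2.1 * m : ℕ) : ZMod (m*(n₁+1))), hFsum p.1.1 p.1.2 p.2⟩
  have hFbij : Function.Bijective F := by
    constructor
    · rintro ⟨⟨d, hd⟩, j⟩ ⟨⟨d', hd'⟩, j'⟩ heq
      have hrel1 : ∀ i, (F (⟨d, hd⟩, j)).1 i
          = (d i : ZMod (m*(n₁+1))) - ((j.1 * m : ℕ) : ZMod (m*(n₁+1))) := fun i => rfl
      have hrel2 : ∀ i, (F (⟨d, hd⟩, j)).1 i
          = (d' i : ZMod (m*(n₁+1))) - ((j'.1 * m : ℕ) : ZMod (m*(n₁+1))) := fun i => by rw [heq]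
      have he1 := hlift (F (⟨d, hd⟩, j)).1 d hd j.1 hrel1
      have he2 := hlift (F (⟨d, hd⟩, j)).1 d' hd' j'.1 hrel2
      have hb1 : j.1 < (n₁+1) ∧ BreakT m (n₁+1) (fun i => ((F (⟨d, hd⟩, j)).1 i).val) j.1 := by
        refine ⟨j.2, ?_⟩
        rw [breakT_iff_isBreak, he1]
        exact hd
      have hb2 : j'.1 < (n₁+1) ∧ BreakT m (n₁+1) (fun i => ((F (⟨d, hd⟩, j)).1 i).val) j'.1 := by
        refine ⟨j'.2, ?_⟩
        rw [breakT_iff_isBreak, he2]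
        exact hd'
      obtain ⟨j₀, _, huniq⟩ := core_exists_unique (x := fun i => ((F (⟨d, hd⟩, j)).1 i).val)
        hm hn (hdvd _ (F (⟨d, hd⟩, j)).2)
      have hjj : j.1 = j'.1 := by rw [huniq j.1 hb1, huniq j'.1 hb2]
      have hj : j = j' := Fin.ext hjj
      subst hj
      have hdd : d = d' := by rw [← he1, ← he2]
      subst hdd
      rfl
    · rintro ⟨x, hx⟩
      obtain ⟨j₀, ⟨hj₀n, hj₀b⟩, _⟩ :=
        core_exists_unique (x := fun i => (x i).val) hm hn (hdvd x hx)
      rw [breakT_iff_isBreak] at hj₀b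
      refine ⟨⟨⟨dd m (n₁+1) (fun i => (x i).val) j₀, hj₀b⟩, ⟨j₀, hj₀n⟩⟩, ?_⟩
      apply Subtype.ext
      funext i
      show (dd m (n₁+1) (fun i => (x i).val) j₀ i : ZMod (m*(n₁+1))) - ((j₀ * m : ℕ) : ZMod (m*(n₁+1))) = x i
      unfold dd
      rw [hcast_mod]
      push_cast
      rw [ZMod.natCast_val, ZMod.cast_id]
      ring
  have hcard1 : Nat.card ({d : Fin (n₁+1) → ℕ // IsBreakDivisor m (n₁+1) d} × Fin (n₁+1))
      = Nat.card {x : Fin (n₁+1) → ZMod (m*(n₁+1)) // ∑ i, x i = ((gZ m (n₁+1) : ℤ) : ZMod (m*(n₁+1)))} :=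
    Nat.card_eq_of_bijective F hFbij
  have e2 : {x : Fin (n₁+1) → ZMod (m*(n₁+1)) // ∑ i, x i = ((gZ m (n₁+1) : ℤ) : ZMod (m*(n₁+1)))}
      ≃ (Fin n₁ → ZMod (m*(n₁+1))) := by
    refine ⟨fun x i => x.1 i.castSucc,
      fun y => ⟨Fin.snoc y (((gZ m (n₁+1) : ℤ) : ZMod (m*(n₁+1))) - ∑ i, y i), ?_⟩, ?_, ?_⟩
    · rw [Fin.sum_univ_castSucc]
      simp
    · intro x
      apply Subtype.ext
      funext i
      induction i using Fin.lastCases with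
      | last =>
        simp only [Fin.snoc_last]
        have h9 := x.2
        rw [Fin.sum_univ_castSucc] at h9
        linear_combination -h9
      | cast i' => simp
    · intro y
      funext i
      simp
  have hcardX : Nat.card {x : Fin (n₁+1) → ZMod (m*(n₁+1)) //
      ∑ i, x i = ((gZ m (n₁+1) : ℤ) : ZMod (m*(n₁+1)))} = (m*(n₁+1)) ^ n₁ := by
    rw [Nat.card_congr e2, Nat.card_fun]
    simp [Nat.card_zmod]
  have hcard2 : Nat.card {d : Fin (n₁+1) → ℕ // IsBreakDivisor m (n₁+1) d} * (n₁ + 1)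
      = (m*(n₁+1)) ^ n₁ := by
    rw [← hcardX, ← hcard1, Nat.card_prod]
    simp
  have hNpow : (m*(n₁+1)) ^ n₁ = m ^ n₁ * (n₁ + 1) ^ n₁ := mul_pow m (n₁+1) n₁
  have hn₁ : 1 ≤ n₁ := Nat.succ_le_succ_iff.mp hn
  have hpow2 : (n₁ + 1) ^ n₁ = (n₁ + 1) ^ (n₁ - 1) * (n₁ + 1) := by
    rw [← pow_succ]
    congr 1
    exact (Nat.succ_pred_eq_of_pos hn₁).symm
  have hmain : Nat.card {d : Fin (n₁+1) → ℕ // IsBreakDivisor m (n₁+1) d} * (n₁ + 1)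
      = (m ^ n₁ * (n₁ + 1) ^ (n₁ - 1)) * (n₁ + 1) := by
    rw [hcard2, hNpow, hpow2]
    ring
  have hfinal := Nat.eq_of_mul_eq_mul_right (Nat.succ_pos n₁) hmain
  simpa using hfinal

end BDaux

/-- The number of break divisors on `K_n^m` is `m^(n-1) · n^(n-2)`. -/
theorem numBreakDivisors (m n : ℕ) (hm : 0 < m) (hn : 2 ≤ n) :
    Nat.card {d : Fin n → ℕ // IsBreakDivisor m n d} = m ^ (n - 1) * n ^ (n - 2) :=
  BDaux.numBreakDivisors' m n hm hn
end

section
/- For all positive integers m and n with n ≥ 2, the number of K_n^m-parking functions of length n−1 equals m^(n−1) · n^(n−2). -/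
/-!
Pollak's cyclic-shift argument. Entries of a parking function are `< N = m n`, so parking
functions may be read as the tuples `y` in `(ℤ/N)^(n-1)` whose representatives in `[0, N)`
park. For every `y`, exactly `m` of its `N` diagonal translates `y - s` park; as each
translation is a bijection, `N · #PF = N^(n-1) · m`.

To count the good translates, walk along `ℕ`, going up by `1` at each position `z` and down by
`m` for each entry of `y` congruent to `z`. Over a period the walk gains `N - m (n - 1) = m`,
and `y - s` parks iff `s + N` is a strict record of the walk. Since up-steps are at most `1`,
the records after the first period are the first hitting times of the values exceeding the
first period's maximum, so each later period contains exactly `m` of them.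
-/

/-- A `K_n^m`-parking function: a tuple `(a_1,…,a_{n−1})` of nonnegative integers such
that for each `i ∈ {1,…,n−1}` at least `i` of the entries `a_k` satisfy `a_k ≤ m·i − 1`.
(Here `i : Fin (n-1)` corresponds to the index `i+1 ∈ {1,…,n−1}`.) -/
def IsParkingFunction (m n : ℕ) (a : Fin (n - 1) → ℕ) : Prop :=
  ∀ i : Fin (n - 1),
    (i : ℕ) + 1 ≤ (Finset.univ.filter (fun k => a k ≤ m * ((i : ℕ) + 1) - 1)).card

instance (m n : ℕ) : DecidablePred (IsParkingFunction m n) := fun _ => by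
  unfold IsParkingFunction; infer_instance

open Finset

theorem ZMod.card_filter_eq_card_filter_range {N : ℕ} [NeZero N] (P : ZMod N → Prop)
    [DecidablePred P] : #{s | P s} = #{x ∈ range N | P ((x : ℕ) : ZMod N)} := by
  refine card_nbij' ZMod.val (↑) (fun s hs => ?_) (fun x hx => ?_) (fun s _ => ?_)
    (fun x hx => ?_)
  · simp_all [ZMod.val_lt]
  · simp_all
  · exact ZMod.natCast_zmod_val s
  · simp_all [Nat.mod_eq_of_lt]

theorem card_mul_card_filter_eq_sum_card_filter_sub_const {ι G : Type*} [Fintype ι]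
    [DecidableEq ι] [AddGroup G] [Fintype G] (P : (ι → G) → Prop) [DecidablePred P] :
    Fintype.card G * #{y | P y} = ∑ y : ι → G, #{g | P fun k => y k - g} := by
  calc Fintype.card G * #{y | P y}
      = ∑ _g : G, #{y | P y} := by simp
    _ = ∑ g, #{y | P fun k => y k - g} :=
        sum_congr rfl fun g _ =>
          (card_equiv (Equiv.subRight (Function.const ι g)) (by simp [Pi.sub_def])).symm
    _ = ∑ y : ι → G, #{g | P fun k => y k - g} := by simp only [card_filter]; exact sum_comm

def IsStrictRecord (W : ℕ → ℤ) (x : ℕ) : Prop := ∀ x' < x, W x' < W x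

instance (W : ℕ → ℤ) : DecidablePred (IsStrictRecord W) := fun _ => by
  unfold IsStrictRecord; infer_instance

section StrictRecords

variable {W : ℕ → ℤ} {N m : ℕ}

theorem exists_isStrictRecord_eq_of_step_le_one (hstep : ∀ x, W (x + 1) ≤ W x + 1) {v : ℤ}
    (h0 : W 0 < v) (hv : ∃ x, v ≤ W x) : ∃ s, W s = v ∧ IsStrictRecord W s := by
  classical
  have hpos : Nat.find hv ≠ 0 := fun h => (Nat.find_spec hv).not_gt (h ▸ h0)
  obtain ⟨s, hs⟩ := Nat.exists_eq_succ_of_ne_zero hpos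
  have hprev : W s < v := not_le.1 (Nat.find_min hv (by omega))
  have hfind : W (Nat.find hv) = v := le_antisymm (hs ▸ by linarith [hstep s]) (Nat.find_spec hv)
  exact ⟨Nat.find hv, hfind, fun x hx => hfind.symm ▸ not_le.1 (Nat.find_min hv hx)⟩

theorem isStrictRecord_add_iff (hW : ∀ x, W x < W (x + N)) (x : ℕ) :
    IsStrictRecord W (x + N) ↔ ∀ c < N, W (x + c) < W (x + N) := by
  have hN : N ≠ 0 := fun h => (hW 0).ne (by rw [h, add_zero])
  refine ⟨fun h c hc => h _ (by omega), fun h x' hx' => ?_⟩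
  induction hk : x + N - x' using Nat.strong_induction_on generalizing x' with
  | _ k ih =>
    by_cases hx : x ≤ x'
    · simpa [Nat.add_sub_cancel' hx] using h (x' - x) (by omega)
    · exact (hW x').trans (ih (x + N - (x' + N)) (by omega) (x' + N) (by omega) rfl)

theorem card_filter_isStrictRecord_add (hN : 0 < N) (hper : ∀ x, W (x + N) = W x + m)
    (hstep : ∀ x, W (x + 1) ≤ W x + 1) :
    #{x ∈ range N | IsStrictRecord W (x + N)} = m := by
  obtain ⟨x₀, hx₀, hmax⟩ := exists_max_image (range N) W ⟨0, mem_range.2 hN⟩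
  rw [mem_range] at hx₀
  have hle : ∀ x < N, W x ≤ W x₀ := fun x hx => hmax x (mem_range.2 hx)
  calc #{x ∈ range N | IsStrictRecord W (x + N)}
      = #(Icc (W x₀ + 1) (W x₀ + m)) := by
        refine card_nbij (fun x => W (x + N)) (fun x hx => ?_) (fun x₁ hx₁ x₂ hx₂ h => ?_)
          (fun v hv => ?_)
        · simp only [coe_filter, mem_range, Set.mem_ofPred_eq] at hx
          have := hle x hx.1
          have := hx.2 x₀ (by omega)
          have := hper x
          simp only [coe_Icc, Set.mem_Icc]
          omega
        · simp only [coe_filter, mem_range, Set.mem_ofPred_eq] at hx₁ hx₂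
          by_contra hne
          rcases lt_or_gt_of_ne hne with hlt | hlt
          · exact (hx₂.2 _ (by omega)).ne h
          · exact (hx₁.2 _ (by omega)).ne h.symm
        · simp only [coe_Icc, Set.mem_Icc] at hv
          obtain ⟨s, rfl, hs⟩ := exists_isStrictRecord_eq_of_step_le_one hstep
            (by linarith [hle 0 hN]) ⟨x₀ + N, by rw [hper]; omega⟩
          have hNs : N ≤ s := by
            by_contra! h
            linarith [hle s h]
          have hs2 : s < 2 * N := by
            by_contra! h
            have := hs (x₀ + N) (by omega)
            rw [hper] at this
            omega
          refine ⟨s - N, ?_, by simp only [Nat.sub_add_cancel hNs]⟩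
          simp only [coe_filter, mem_range, Set.mem_ofPred_eq, Nat.sub_add_cancel hNs]
          exact ⟨by omega, hs⟩
    _ = m := by simp

end StrictRecords

theorem forall_lt_sub_iff_of_antitone {T : ℕ → ℕ} (hT : Antitone T) {m n : ℕ} (hm : 0 < m) :
    (∀ i < n, T (m * i) < n - i) ↔ ∀ c < m * n, m * T c < m * n - c := by
  constructor
  · intro h c hc
    have hq : c / m < n := Nat.div_lt_of_lt_mul hc
    have hTc : m * (T c + 1) ≤ m * (n - c / m) :=
      Nat.mul_le_mul_left m ((hT (Nat.mul_div_le c m)).trans_lt (h _ hq))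
    rw [Nat.mul_sub, mul_add, mul_one] at hTc
    have := Nat.lt_mul_div_succ c hm
    rw [mul_add, mul_one] at this
    omega
  · intro h i hi
    have := h (m * i) (Nat.mul_lt_mul_of_pos_left hi hm)
    rw [← Nat.mul_sub] at this
    exact Nat.lt_of_mul_lt_mul_left this

section Criterion

variable {m n : ℕ}

theorem isParkingFunction_iff_card_le_lt (hm : 0 < m) (a : Fin (n - 1) → ℕ) :
    IsParkingFunction m n a ↔ ∀ i < n, #{k | m * i ≤ a k} < n - i := by
  have hsplit : ∀ i, 0 < i → #{k | a k ≤ m * i - 1} + #{k | m * i ≤ a k} = n - 1 := by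
    intro i hi
    have hmi : 0 < m * i := Nat.mul_pos hm hi
    have h := card_filter_add_card_filter_not (s := univ) (fun k => a k ≤ m * i - 1)
    rw [card_univ, Fintype.card_fin] at h
    refine (congrArg (_ + ·) ?_).trans h
    congr 1
    ext k
    simp only [mem_filter, mem_univ, true_and]
    omega
  constructor
  · intro h i hi
    rcases Nat.eq_zero_or_pos i with rfl | hi0
    · have := card_filter_le (univ : Finset (Fin (n - 1))) (fun k => m * 0 ≤ a k)
      rw [card_univ, Fintype.card_fin] at this
      omega
    · have := h ⟨i - 1, by omega⟩
      have := hsplit i hi0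
      simp only [Nat.sub_add_cancel hi0] at *
      omega
  · intro h i
    have := h (i + 1) (by omega)
    have := hsplit (i + 1) (by omega)
    omega

theorem isParkingFunction_iff_forall_mul_card_le_lt (hm : 0 < m) (a : Fin (n - 1) → ℕ) :
    IsParkingFunction m n a ↔ ∀ c < m * n, m * #{k | c ≤ a k} < m * n - c :=
  (isParkingFunction_iff_card_le_lt hm a).trans <|
    forall_lt_sub_iff_of_antitone (T := fun c => #{k | c ≤ a k})
    (fun _ _ h => card_le_card (monotone_filter_right _ fun _ _ hk => h.trans hk)) hm

theorem IsParkingFunction.lt_mul (hm : 0 < m) {a : Fin (n - 1) → ℕ}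
    (ha : IsParkingFunction m n a) (k : Fin (n - 1)) : a k < m * n := by
  have := k.isLt
  by_contra! hk
  have hmn : 0 < m * n := Nat.mul_pos hm (by omega)
  have hpos : 0 < #{k' | m * n - 1 ≤ a k'} :=
    card_pos.2 ⟨k, by simp only [mem_filter, mem_univ, true_and]; omega⟩
  have := (isParkingFunction_iff_forall_mul_card_le_lt hm a).1 ha (m * n - 1) (by omega)
  have := Nat.mul_le_mul_left m hpos
  omega

end Criterion

namespace ParkingFunction

section CyclicWalk

variable {N p : ℕ} (m : ℕ) (y : Fin p → ZMod N)

def cyclicWalk (x : ℕ) : ℤ := x - m * ∑ z ∈ range x, #{k | y k = z}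

theorem cyclicWalk_add (x d : ℕ) :
    cyclicWalk m y (x + d) =
      cyclicWalk m y x + d - m * ∑ z ∈ range d, #{k | y k = ↑(x + z)} := by
  simp only [cyclicWalk, sum_range_add]
  push_cast
  ring

theorem cyclicWalk_succ_le (x : ℕ) : cyclicWalk m y (x + 1) ≤ cyclicWalk m y x + 1 := by
  rw [cyclicWalk_add, Nat.cast_one]
  exact sub_le_self _ (by positivity)

theorem sum_card_eq_card_le_val_sub [NeZero N] (x c : ℕ) (hc : c ≤ N) :
    ∑ d ∈ range (N - c), #{k | y k = ↑(x + c + d)} = #{k | c ≤ (y k - x).val} := by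
  have hfiber : ∀ d ∈ range (N - c),
      #{k | y k = ↑(x + c + d)} = #{k | (y k - x).val = c + d} := by
    intro d hd
    have hlt : c + d < N := by rw [mem_range] at hd; omega
    congr 1
    ext k
    rw [mem_filter, mem_filter, ← ZMod.val_cast_of_lt hlt, (ZMod.val_injective N).eq_iff,
      sub_eq_iff_eq_add', add_assoc, Nat.cast_add, Nat.cast_add]
  rw [sum_congr rfl hfiber, ← sum_Ico_eq_sum_range (fun e => #{k | (y k - x).val = e}),
    sum_card_fiberwise_eq_card_filter]
  congr 1
  ext k
  simp only [mem_filter, mem_univ, true_and, mem_Ico, and_iff_left (ZMod.val_lt _)]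

theorem cyclicWalk_add_self_of_le [NeZero N] (x c : ℕ) (hc : c ≤ N) :
    cyclicWalk m y (x + N) =
      cyclicWalk m y (x + c) + (N - c : ℕ) - m * #{k | c ≤ (y k - x).val} := by
  rw [show x + N = x + c + (N - c) by omega, cyclicWalk_add,
    ← sum_card_eq_card_le_val_sub y x c hc]

theorem cyclicWalk_add_self [NeZero N] (x : ℕ) :
    cyclicWalk m y (x + N) = cyclicWalk m y x + N - m * p := by
  simpa using cyclicWalk_add_self_of_le m y x 0 (Nat.zero_le N)

end CyclicWalk

section Shifts

variable {m n : ℕ} [NeZero m] [NeZero n]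

theorem cyclicWalk_add_mul (y : Fin (n - 1) → ZMod (m * n)) (x : ℕ) :
    cyclicWalk m y (x + m * n) = cyclicWalk m y x + m := by
  rw [cyclicWalk_add_self, Nat.cast_sub NeZero.one_le]
  push_cast
  ring

theorem isParkingFunction_sub_iff_isStrictRecord (y : Fin (n - 1) → ZMod (m * n)) (x : ℕ) :
    IsParkingFunction m n (fun k => (y k - x).val) ↔
      IsStrictRecord (cyclicWalk m y) (x + m * n) := by
  have hdrift (x : ℕ) : cyclicWalk m y x < cyclicWalk m y (x + m * n) := by
    rw [cyclicWalk_add_mul]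
    exact lt_add_of_pos_right _ (by exact_mod_cast NeZero.pos m)
  rw [isParkingFunction_iff_forall_mul_card_le_lt (NeZero.pos m),
    isStrictRecord_add_iff hdrift]
  refine forall₂_congr fun c hc => ?_
  rw [cyclicWalk_add_self_of_le m y x c hc.le]
  omega

theorem card_filter_isParkingFunction_sub (y : Fin (n - 1) → ZMod (m * n)) :
    #{s : ZMod (m * n) | IsParkingFunction m n fun k => (y k - s).val} = m := by
  calc #{s : ZMod (m * n) | IsParkingFunction m n fun k => (y k - s).val}
      = #{x ∈ range (m * n) | IsParkingFunction m n fun k => (y k - (x : ℕ)).val} :=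
        ZMod.card_filter_eq_card_filter_range _
    _ = #{x ∈ range (m * n) | IsStrictRecord (cyclicWalk m y) (x + m * n)} :=
        congrArg card (filter_congr fun x _ => isParkingFunction_sub_iff_isStrictRecord y x)
    _ = m := card_filter_isStrictRecord_add (NeZero.pos _) (cyclicWalk_add_mul y)
        (cyclicWalk_succ_le m y)

theorem natCard_eq_card_filter_zmod :
    Nat.card {a : Fin (n - 1) → ℕ // IsParkingFunction m n a} =
      #{y : Fin (n - 1) → ZMod (m * n) | IsParkingFunction m n fun k => (y k).val} := by
  have hlt {a} (ha : IsParkingFunction m n a) (k) := ha.lt_mul (NeZero.pos m) k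
  let e : {a : Fin (n - 1) → ℕ // IsParkingFunction m n a} ≃
      {y : Fin (n - 1) → ZMod (m * n) // IsParkingFunction m n fun k => (y k).val} :=
    { toFun a := ⟨fun k => a.1 k, by simpa only [ZMod.val_cast_of_lt (hlt a.2 _)] using a.2⟩
      invFun y := ⟨fun k => (y.1 k).val, y.2⟩
      left_inv a := Subtype.ext <| funext fun k => ZMod.val_cast_of_lt (hlt a.2 k)
      right_inv y := Subtype.ext <| funext fun k => ZMod.natCast_zmod_val (y.1 k) }
  rw [Nat.card_congr e, Nat.card_eq_fintype_card, Fintype.card_subtype]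

end Shifts

end ParkingFunction

/-- The number of `K_n^m`-parking functions of length `n−1` is `m^(n-1) · n^(n-2)`. -/
theorem numParkingFunctions (m n : ℕ) (hm : 0 < m) (hn : 2 ≤ n) :
    Nat.card {a : Fin (n - 1) → ℕ // IsParkingFunction m n a} =
      m ^ (n - 1) * n ^ (n - 2) := by
  have : NeZero m := ⟨hm.ne'⟩
  have : NeZero n := ⟨by omega⟩
  have hdouble := card_mul_card_filter_eq_sum_card_filter_sub_const
    (fun y : Fin (n - 1) → ZMod (m * n) => IsParkingFunction m n fun k => (y k).val)
  rw [sum_congr rfl fun y _ => ParkingFunction.card_filter_isParkingFunction_sub y] at hdouble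
  simp only [sum_const, card_univ, ZMod.card, Fintype.card_fun, Fintype.card_fin, smul_eq_mul]
    at hdouble
  rw [ParkingFunction.natCard_eq_card_filter_zmod]
  apply Nat.eq_of_mul_eq_mul_left (Nat.mul_pos hm (by omega : 0 < n))
  rw [hdouble, show n - 1 = n - 2 + 1 by omega]
  ring
end

section
/- Fix positive integers m and n with n ≥ 2, and let δ = (m(n−1)−1, m(n−2)−1, …, m·1−1, 0) ∈ ℝ^n. A function d : {1,…,n} → ℕ is a break divisor on K_n^m if and only if the point (d(1),…,d(n)) ∈ ℝ^n lies in the convex hull of the set of all vectors obtained from δ by permuting its coordinates. -/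
/-- The vector `δ = (m(n−1)−1, m(n−2)−1, …, m·1−1, 0) ∈ ℝ^n` (0-indexed:
`δ_i = m(n−1−i) − 1` for `i < n−1`, and `δ_{n−1} = 0`). -/
def deltaVec (m n : ℕ) : Fin n → ℝ :=
  fun i => if (i : ℕ) = n - 1 then 0 else (m : ℝ) * ((n : ℝ) - 1 - (i : ℕ)) - 1

/-!
Listed in increasing order, `δ` becomes `deltaAsc m = (0, m - 1, 2m - 1, …)`, whose `k ≥ 1`
smallest entries sum to `m·k(k-1)/2 - k + 1`. So `d` is a break divisor exactly when every
`k`-element subset sum of `d` is at least the sum of the `k` smallest entries of `δ`, with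
equality for `k = n`, i.e. when
`d` is majorized by `δ`, and Rado's theorem identifies these vectors with the permutohedron of `δ`.
The majorization conditions are linear, so they hold on the whole permutohedron. Conversely, a
linear functional `c` separating a majorized `x` from the permutohedron is, by summation by parts
along the order that sorts `c`, no larger at `x` than at the vertex sorted like `c`.
-/

open Finset

def permOrbit {ι α : Type*} (y : ι → α) : Set (ι → α) := {x | ∃ σ : Equiv.Perm ι, x = y ∘ σ}

section PermOrbit

variable {ι α : Type*}

lemma permOrbit_comp_perm (y : ι → α) (τ : Equiv.Perm ι) : permOrbit (y ∘ τ) = permOrbit y := by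
  ext x
  constructor
  · rintro ⟨σ, rfl⟩
    exact ⟨σ.trans τ, rfl⟩
  · rintro ⟨σ, rfl⟩
    exact ⟨σ.trans τ.symm, by ext; simp⟩

lemma permOrbit_finite [Finite ι] (y : ι → α) : (permOrbit y).Finite :=
  (Set.finite_range fun σ : Equiv.Perm ι => y ∘ σ).subset fun _ ⟨σ, h⟩ => ⟨σ, h.symm⟩

end PermOrbit

lemma Monotone.sum_range_card_le_sum {M : Type*} [AddCommMonoid M] [PartialOrder M]
    [IsOrderedAddMonoid M] {y : ℕ → M} (hy : Monotone y) (T : Finset ℕ) :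
    ∑ i ∈ range #T, y i ≤ ∑ i ∈ T, y i := by
  induction T using Finset.induction_on_max with
  | empty => simp
  | insert a s ha ih =>
    have has : a ∉ s := fun h => lt_irrefl a (ha a h)
    have hcard : #s ≤ a := by
      simpa using card_le_card fun i hi => mem_range.2 (ha i hi)
    rw [card_insert_of_notMem has, sum_range_succ, sum_insert has, add_comm (y a)]
    exact add_le_add ih (hy hcard)

lemma sum_range_mul_nonpos_of_sum_range_nonneg {R : Type*} [CommRing R] [PartialOrder R]
    [IsOrderedRing R] {a w : ℕ → R} {N : ℕ} (ha : MonotoneOn a (Set.Iio N))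
    (hw : ∀ k ≤ N, 0 ≤ ∑ i ∈ range k, w i) (hN : ∑ i ∈ range N, w i = 0) :
    ∑ i ∈ range N, a i * w i ≤ 0 := by
  have := sum_range_by_parts a w N
  simp only [smul_eq_mul] at this
  rw [this, hN, mul_zero, zero_sub, neg_nonpos]
  refine sum_nonneg fun i hi => ?_
  rw [mem_range] at hi
  exact mul_nonneg (sub_nonneg.2 (ha (Set.mem_Iio.2 (by omega)) (Set.mem_Iio.2 (by omega))
    i.le_succ)) (hw _ (by omega))

section Permutohedron

variable {n : ℕ} {y : ℕ → ℝ}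

lemma sum_range_dite_eq_sum_map (g : Fin n → ℝ) {k : ℕ} (hk : k ≤ n) :
    ∑ i ∈ range k, (if h : i < n then g ⟨i, h⟩ else 0) =
      ∑ j ∈ univ.map (Fin.castLEEmb hk), g j := by
  rw [sum_map, ← Fin.sum_univ_eq_sum_range]
  exact sum_congr rfl fun j _ => dif_pos (j.isLt.trans_le hk)

lemma sum_range_card_le_sum_of_mem_convexHull_permOrbit (hy : Monotone y) {x : Fin n → ℝ}
    (hx : x ∈ convexHull ℝ (permOrbit fun i : Fin n => y i)) :
    ∑ i, x i = ∑ i ∈ range n, y i ∧ ∀ S : Finset (Fin n), ∑ i ∈ range #S, y i ≤ ∑ i ∈ S, x i := by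
  have hsumS : ∀ S : Finset (Fin n), IsLinearMap ℝ fun x : Fin n → ℝ => ∑ i ∈ S, x i :=
    fun S => ⟨fun _ _ => sum_add_distrib, fun _ _ => by
      simp only [Pi.smul_apply, smul_eq_mul, mul_sum]⟩
  have hconv : Convex ℝ ({x : Fin n → ℝ | ∑ i ∈ univ, x i = ∑ i ∈ range n, y i} ∩
      ⋂ S : Finset (Fin n), {x | ∑ i ∈ range #S, y i ≤ ∑ i ∈ S, x i}) :=
    (convex_hyperplane (hsumS univ) _).inter
      (convex_iInter fun S => convex_halfSpace_ge (hsumS S) _)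
  suffices h : permOrbit (fun i : Fin n => y i) ⊆
      {x | ∑ i ∈ univ, x i = ∑ i ∈ range n, y i} ∩
        ⋂ S : Finset (Fin n), {x | ∑ i ∈ range #S, y i ≤ ∑ i ∈ S, x i} by
    simpa using convexHull_min h hconv hx
  rintro _ ⟨σ, rfl⟩
  refine ⟨?_, Set.mem_iInter.2 fun S => ?_⟩
  · simp only [Set.mem_ofPred_eq, Function.comp_apply]
    rw [Equiv.sum_comp σ fun i => y i, Fin.sum_univ_eq_sum_range]
  · simpa using hy.sum_range_card_le_sum (S.map (σ.toEmbedding.trans Fin.valEmbedding))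

lemma mem_convexHull_permOrbit_of_sum_range_card_le {x : Fin n → ℝ}
    (hsum : ∑ i, x i = ∑ i ∈ range n, y i)
    (hS : ∀ S : Finset (Fin n), ∑ i ∈ range #S, y i ≤ ∑ i ∈ S, x i) :
    x ∈ convexHull ℝ (permOrbit fun i : Fin n => y i) := by
  by_contra hx
  obtain ⟨f, u, hfu, hux⟩ := geometric_hahn_banach_closed_point (convex_convexHull ℝ _)
    ((permOrbit_finite _).isClosed_convexHull ℝ) hx
  set c : Fin n → ℝ := fun i => f (Pi.single i 1)
  set τ := Tuple.sort c
  -- `c` and `x` read in the order `τ` that sorts `c`, extended by `0` to all of `ℕ`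
  set A : ℕ → ℝ := fun i => if h : i < n then c (τ ⟨i, h⟩) else 0
  set X : ℕ → ℝ := fun i => if h : i < n then (x ∘ τ) ⟨i, h⟩ else 0
  have hf : ∀ g : Fin n → ℝ,
      f g = ∑ i ∈ range n, A i * (if h : i < n then (g ∘ τ) ⟨i, h⟩ else 0) := fun g => by
    rw [← ContinuousLinearMap.coe_coe, LinearMap.pi_apply_eq_sum_univ, ← Equiv.sum_comp τ,
      ← Fin.sum_univ_eq_sum_range]
    refine sum_congr rfl fun i _ => ?_
    simp only [A, c, dif_pos i.isLt, Fin.eta, Function.comp_apply, smul_eq_mul, mul_comm (g _),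
      ContinuousLinearMap.coe_coe]
    congr 2
    ext j
    simp [Pi.single_apply, eq_comm]
  have hA : MonotoneOn A (Set.Iio n) := fun i hi j hj hij => by
    simp only [A, dif_pos (show i < n from hi), dif_pos (show j < n from hj)]
    exact Tuple.monotone_sort c (show (⟨i, hi⟩ : Fin n) ≤ ⟨j, hj⟩ from hij)
  have hprefix : ∀ k ≤ n, 0 ≤ ∑ i ∈ range k, (X i - y i) := fun k hk => by
    have := hS ((univ.map (Fin.castLEEmb hk)).map τ.toEmbedding)
    rw [sum_map, card_map, card_map, card_univ, Fintype.card_fin] at this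
    rw [sum_sub_distrib, sub_nonneg, sum_range_dite_eq_sum_map (x ∘ τ) hk]
    exact this
  have htotal : ∑ i ∈ range n, (X i - y i) = 0 := by
    rw [sum_sub_distrib, sub_eq_zero, sum_range_dite_eq_sum_map (x ∘ τ) le_rfl, ← hsum, sum_map]
    exact Equiv.sum_comp τ x
  have hfv : f (fun i => y (τ.symm i)) = ∑ i ∈ range n, A i * y i := by
    rw [hf]
    refine sum_congr rfl fun i hi => ?_
    simp [dif_pos (mem_range.1 hi)]
  have hfx_le : f x ≤ f fun i => y (τ.symm i) := by
    rw [hf, hfv, ← sub_nonpos, ← sum_sub_distrib]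
    simpa only [mul_sub] using sum_range_mul_nonpos_of_sum_range_nonneg hA hprefix htotal
  have hv : (fun i => y (τ.symm i)) ∈ permOrbit fun i : Fin n => y i := ⟨τ.symm, rfl⟩
  linarith [hfu _ (subset_convexHull ℝ _ hv)]

theorem mem_convexHull_permOrbit_iff (hy : Monotone y) (x : Fin n → ℝ) :
    x ∈ convexHull ℝ (permOrbit fun i : Fin n => y i) ↔
      ∑ i, x i = ∑ i ∈ range n, y i ∧ ∀ S : Finset (Fin n), ∑ i ∈ range #S, y i ≤ ∑ i ∈ S, x i :=
  ⟨sum_range_card_le_sum_of_mem_convexHull_permOrbit hy,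
    fun h => mem_convexHull_permOrbit_of_sum_range_card_le h.1 h.2⟩

end Permutohedron

def deltaAsc (m i : ℕ) : ℝ := if i = 0 then 0 else m * i - 1

lemma deltaAsc_monotone {m : ℕ} (hm : 0 < m) : Monotone (deltaAsc m) := by
  refine monotone_nat_of_le_succ fun i => ?_
  have : (1 : ℝ) ≤ m := by exact_mod_cast hm
  rcases Nat.eq_zero_or_pos i with rfl | hi
  · simp [deltaAsc, this]
  · simp only [deltaAsc, Nat.pos_iff_ne_zero.1 hi, Nat.succ_ne_zero, if_false]
    push_cast
    nlinarith

lemma sum_range_succ_deltaAsc (m k : ℕ) :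
    ∑ i ∈ range (k + 1), deltaAsc m i = m * (k + 1) * k / 2 - k := by
  induction k with
  | zero => simp [deltaAsc]
  | succ k ih =>
    rw [sum_range_succ, ih, deltaAsc, if_neg k.succ_ne_zero]
    push_cast
    ring

lemma cast_genusZ {m k : ℕ} (hk : 1 ≤ k) : (genusZ m k : ℝ) = ∑ i ∈ range k, deltaAsc m i := by
  obtain ⟨k, rfl⟩ := Nat.exists_eq_add_of_le' hk
  have hdvd : (2 : ℤ) ∣ m * (k + 1 : ℕ) * ((k + 1 : ℕ) - 1) := by
    rw [mul_assoc]
    exact (Int.even_mul_pred_self _).two_dvd.mul_left _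
  rw [sum_range_succ_deltaAsc, genusZ, Int.cast_add, Int.cast_sub, Int.cast_div hdvd (by norm_num)]
  push_cast
  ring

lemma deltaVec_eq_comp_rev (m n : ℕ) :
    deltaVec m n = (fun i : Fin n => deltaAsc m i) ∘ Fin.revPerm := by
  ext i
  have hi := i.isLt
  simp only [deltaVec, deltaAsc, Function.comp_apply, Fin.revPerm_apply, Fin.val_rev]
  by_cases h : (i : ℕ) = n - 1
  · rw [if_pos h, if_pos (by omega)]
  · rw [if_neg h, if_neg (by omega), Nat.cast_sub (by omega)]
    push_cast
    ring

lemma isBreakDivisor_iff {m n : ℕ} (hn : 1 ≤ n) (d : Fin n → ℕ) :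
    IsBreakDivisor m n d ↔ ∑ i, (d i : ℝ) = ∑ i ∈ range n, deltaAsc m i ∧
      ∀ S : Finset (Fin n), ∑ i ∈ range #S, deltaAsc m i ≤ ∑ i ∈ S, (d i : ℝ) := by
  refine and_congr ?_ (forall_congr' fun S => ?_)
  · rw [← cast_genusZ hn]
    exact_mod_cast Iff.rfl
  · rcases S.eq_empty_or_nonempty with rfl | hS
    · simp
    · rw [← cast_genusZ (card_pos.2 hS)]
      exact ⟨fun h => by exact_mod_cast h hS, fun h _ => by exact_mod_cast h⟩

/-- A function `d : Fin n → ℕ` is a break divisor on `K_n^m` if and only if the point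
`(d 1, …, d n)` lies in the convex hull of the permutations of the coordinates of `δ`. -/
theorem breakDivisor_iff_mem_permutohedron (m n : ℕ) (hm : 0 < m) (hn : 2 ≤ n)
    (d : Fin n → ℕ) :
    IsBreakDivisor m n d ↔
      (fun i => (d i : ℝ)) ∈
        convexHull ℝ {x : Fin n → ℝ | ∃ σ : Equiv.Perm (Fin n), x = deltaVec m n ∘ σ} := by
  change _ ↔ _ ∈ convexHull ℝ (permOrbit (deltaVec m n))
  rw [deltaVec_eq_comp_rev, permOrbit_comp_perm,
    mem_convexHull_permOrbit_iff (deltaAsc_monotone hm)]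
  exact isBreakDivisor_iff (by omega) d
end

section
/- Fix positive integers m and n with n ≥ 2, and let d : {1,…,n} → ℕ be weakly decreasing (d(1) ≥ d(2) ≥ … ≥ d(n)) with ∑_{i=1}^n d(i) = g(m,n). Then d is a break divisor on K_n^m if and only if for every k ∈ {1,…,n−1} one has ∑_{i=1}^k d(i) ≤ ∑_{i=1}^k (m(n−i)−1), i.e., the tuple d is dominated by δ = (m(n−1)−1, m(n−2)−1, …, m·1−1, 0). -/
lemma strictMono_val_le {k n : ℕ} {f : Fin k → Fin n} (hf : StrictMono f) :
    ∀ j (hj : j < k), j ≤ (f ⟨j, hj⟩ : ℕ)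
  | 0, _ => Nat.zero_le _
  | j + 1, hj => by
    have h1 := strictMono_val_le hf j (Nat.lt_of_succ_lt hj)
    have h2 : f ⟨j, Nat.lt_of_succ_lt hj⟩ < f ⟨j + 1, hj⟩ := hf (by simp [Fin.lt_def])
    rw [Fin.lt_def] at h2
    omega

lemma filter_lt_eq_map {n k : ℕ} (hk : k ≤ n) :
    Finset.univ.filter (fun i : Fin n => (i : ℕ) < k) =
      Finset.map (Fin.castLEEmb hk) Finset.univ := by
  ext i
  simp only [Finset.mem_filter, Finset.mem_univ, true_and, Finset.mem_map,
    Fin.castLEEmb_apply, Fin.coe_castLE]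
  constructor
  · intro h
    exact ⟨⟨i, h⟩, Fin.ext rfl⟩
  · rintro ⟨j, rfl⟩
    simpa using j.isLt

lemma sum_le_filter_sum {n k : ℕ} (d : Fin n → ℕ)
    (hmono : ∀ i j : Fin n, i ≤ j → d j ≤ d i) (T : Finset (Fin n)) (hT : T.card = k) :
    ∑ i ∈ T, (d i : ℤ) ≤
      ∑ i ∈ Finset.univ.filter (fun i : Fin n => (i : ℕ) < k), (d i : ℤ) := by
  have hk : k ≤ n := by
    have := Finset.card_le_univ T
    simpa [hT] using this
  rw [filter_lt_eq_map hk, Finset.sum_map]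
  have e := T.orderIsoOfFin hT
  have hL : ∑ i ∈ T, (d i : ℤ) = ∑ j : Fin k, (d (T.orderEmbOfFin hT j) : ℤ) := by
    rw [← Finset.sum_coe_sort T (fun i => (d i : ℤ))]
    rw [← Equiv.sum_comp (T.orderIsoOfFin hT).toEquiv (fun i : T => (d (i : Fin n) : ℤ))]
    rfl
  rw [hL]
  apply Finset.sum_le_sum
  intro j _
  have hle : (Fin.castLEEmb hk) j ≤ T.orderEmbOfFin hT j := by
    have := strictMono_val_le (T.orderEmbOfFin hT).strictMono j j.isLt
    simpa [Fin.le_def] using this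
  exact_mod_cast hmono _ _ hle

lemma two_mul_half (m : ℕ) (c : ℤ) : 2 * ((m : ℤ) * c * (c - 1) / 2) = (m : ℤ) * c * (c - 1) := by
  apply Int.mul_ediv_cancel'
  have h : (2 : ℤ) ∣ c * (c - 1) := by
    have := Int.even_mul_succ_self (c - 1)
    have h2 : Even (c * (c - 1)) := by
      rw [mul_comm]
      simpa using this
    exact h2.two_dvd
  calc (2:ℤ) ∣ (m:ℤ) * (c * (c-1)) := Dvd.dvd.mul_left h m
    _ = (m:ℤ) * c * (c-1) := by ring

lemma rhs_sum (m n k : ℕ) :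
    ∑ i ∈ Finset.range k, ((m : ℤ) * ((n : ℤ) - 1 - (i : ℤ)) - 1) =
      (m : ℤ) * k * ((n : ℤ) - 1) - (m : ℤ) * ((∑ i ∈ Finset.range k, i : ℕ) : ℤ) - k := by
  induction k with
  | zero => simp
  | succ k ih =>
    rw [Finset.sum_range_succ, ih, Finset.sum_range_succ]
    push_cast
    ring


/-- A weakly decreasing `d : Fin n → ℕ` with `∑ d i = g(m,n)` is a break divisor on
`K_n^m` if and only if it is dominated by `δ = (m(n−1)−1, m(n−2)−1, …, m·1−1, 0)`,
i.e. for every `k ∈ {1,…,n−1}` the sum of the first `k` entries of `d` is at most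
`∑_{i=1}^k (m(n−i)−1)`. -/
theorem breakDivisor_iff_dominated (m n : ℕ) (hm : 0 < m) (hn : 2 ≤ n)
    (d : Fin n → ℕ)
    (hmono : ∀ i j : Fin n, i ≤ j → d j ≤ d i)
    (hsum : (∑ i, (d i : ℤ)) = genusZ m n) :
    IsBreakDivisor m n d ↔
      ∀ k : ℕ, 1 ≤ k → k ≤ n - 1 →
        ∑ i ∈ Finset.univ.filter (fun i : Fin n => (i : ℕ) < k), (d i : ℤ) ≤
          ∑ i ∈ Finset.range k, ((m : ℤ) * ((n : ℤ) - 1 - (i : ℤ)) - 1) := by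
  have hq := two_mul_half m (n : ℤ)
  constructor
  · intro hbd k hk1 hk2
    have hkn : k < n := by omega
    have hSne : (Finset.univ.filter (fun i : Fin n => ¬ (i : ℕ) < k)).Nonempty := by
      refine ⟨⟨n - 1, by omega⟩, ?_⟩
      simp only [Finset.mem_filter, Finset.mem_univ, true_and, not_lt]
      omega
    have hcard_lt : (Finset.univ.filter (fun i : Fin n => (i : ℕ) < k)).card = k := by
      rw [filter_lt_eq_map hkn.le, Finset.card_map, Finset.card_univ, Fintype.card_fin]
    have hcardS : (Finset.univ.filter (fun i : Fin n => ¬ (i : ℕ) < k)).card = n - k := by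
      have := Finset.card_filter_add_card_filter_not
        (s := (Finset.univ : Finset (Fin n))) (p := fun i : Fin n => (i : ℕ) < k)
      rw [Finset.card_univ, Fintype.card_fin] at this
      omega
    have hsplit := Finset.sum_filter_add_sum_filter_not Finset.univ
      (fun i : Fin n => (i : ℕ) < k) (fun i => (d i : ℤ))
    rw [hsum] at hsplit
    have hbS := hbd.2 _ hSne
    rw [hcardS] at hbS
    have hp := two_mul_half m (((n - k : ℕ)) : ℤ)
    have hG : 2 * ((∑ i ∈ Finset.range k, i : ℕ) : ℤ) = (k : ℤ) * ((k : ℤ) - 1) := by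
      have h := Finset.sum_range_id_mul_two k
      have h2 := congrArg (Nat.cast : ℕ → ℤ) h
      push_cast [Nat.cast_sub hk1] at h2 ⊢
      linarith
    have hR := rhs_sum m n k
    have hsc : (((n - k : ℕ)) : ℤ) = (n : ℤ) - (k : ℤ) := by omega
    have hkey : (m : ℤ) * n * ((n : ℤ) - 1) =
        (m : ℤ) * ((n - k : ℕ) : ℤ) * (((n - k : ℕ) : ℤ) - 1)
          + 2 * ((m : ℤ) * k * ((n : ℤ) - 1))
          - 2 * ((m : ℤ) * ((∑ i ∈ Finset.range k, i : ℕ) : ℤ)) := by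
      rw [hsc]
      linear_combination (m : ℤ) * hG
    rw [hR]
    unfold genusZ at hsplit
    linarith
  · intro hdom
    refine ⟨hsum, ?_⟩
    intro S hSne
    have hsc_le : S.card ≤ n := by
      have := Finset.card_le_univ S
      simpa using this
    have hsc_pos : 1 ≤ S.card := Finset.card_pos.mpr hSne
    rcases eq_or_lt_of_le hsc_le with heq | hlt
    · have hSuniv : S = Finset.univ := Finset.eq_univ_of_card S (by simpa using heq)
      rw [hSuniv, hsum]
      unfold genusZ
      simp only [Finset.card_univ, Fintype.card_fin, heq]
      exact le_rfl
    · have hk1 : 1 ≤ n - S.card := by omega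
      have hk2 : n - S.card ≤ n - 1 := by omega
      have hdk := hdom (n - S.card) hk1 hk2
      have hTsum := sum_le_filter_sum d hmono Sᶜ (by
        rw [Finset.card_compl, Fintype.card_fin])
      have hsplit := Finset.sum_add_sum_compl S (fun i => (d i : ℤ))
      rw [hsum] at hsplit
      have hp := two_mul_half m ((S.card : ℕ) : ℤ)
      have hG : 2 * ((∑ i ∈ Finset.range (n - S.card), i : ℕ) : ℤ) =
          ((n - S.card : ℕ) : ℤ) * (((n - S.card : ℕ) : ℤ) - 1) := by
        have h := Finset.sum_range_id_mul_two (n - S.card)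
        have h2 := congrArg (Nat.cast : ℕ → ℤ) h
        push_cast [Nat.cast_sub hk1] at h2 ⊢
        linarith
      have hR := rhs_sum m n (n - S.card)
      have hsc : ((S.card : ℕ) : ℤ) = (n : ℤ) - ((n - S.card : ℕ) : ℤ) := by omega
      have hkey : (m : ℤ) * n * ((n : ℤ) - 1) =
          (m : ℤ) * S.card * ((S.card : ℤ) - 1)
            + 2 * ((m : ℤ) * ((n - S.card : ℕ) : ℤ) * ((n : ℤ) - 1))
            - 2 * ((m : ℤ) * ((∑ i ∈ Finset.range (n - S.card), i : ℕ) : ℤ)) := by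
        rw [hsc]
        linear_combination (m : ℤ) * hG
      rw [hR] at hdk
      unfold genusZ at hsplit
      linarith
end

section
/- Let μ be a connected loopless multigraph on vertex set V = {1,…,n}, and let D : V → ℤ be a divisor. Then D is a break divisor on μ if and only if for every vertex q ∈ V the divisor D − 1_q (the divisor obtained from D by subtracting 1 at the vertex q) is orientable. -/
/-- A divisor `D` is orientable on the multigraph `μ` if there is an orientation
`a` (i.e. `a i j + a j i = μ i j`) whose indegree minus one equals `D` everywhere. -/
def IsOrientable (n : ℕ) (mu : Fin n → Fin n → ℕ) (D : Fin n → ℤ) : Prop :=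
  ∃ a : Fin n → Fin n → ℕ, (∀ i j, a i j + a j i = mu i j) ∧
    ∀ v, D v = (∑ u, (a u v : ℤ)) - 1

/-- The number of edges of the multigraph `μ` with both endpoints in `S`. -/
def edgesWithin (n : ℕ) (mu : Fin n → Fin n → ℕ) (S : Finset (Fin n)) : ℕ :=
  ∑ i ∈ S, ∑ j ∈ S.filter (fun j => i < j), mu i j

/-- A break divisor on the multigraph `μ` on `n` vertices: an effective divisor of
degree `|E| − n + 1` such that `∑_{v∈S} D v ≥ e(S) − |S| + 1` for every nonempty `S`,
where `e(S)` is the number of edges with both endpoints in `S`. -/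
def IsBreakDivisorMulti (n : ℕ) (mu : Fin n → Fin n → ℕ) (D : Fin n → ℤ) : Prop :=
  (∀ v, 0 ≤ D v) ∧
  (∑ v, D v) = (edgesWithin n mu Finset.univ : ℤ) - n + 1 ∧
  ∀ S : Finset (Fin n), S.Nonempty →
    (edgesWithin n mu S : ℤ) - S.card + 1 ≤ ∑ v ∈ S, D v

lemma edgesWithin_eq_sum_ite (n : ℕ) (mu : Fin n → Fin n → ℕ) (S : Finset (Fin n)) :
    edgesWithin n mu S = ∑ i, ∑ j, if i < j ∧ i ∈ S ∧ j ∈ S then mu i j else 0 := by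
  unfold edgesWithin
  have h1 : ∀ i : Fin n, ∑ j ∈ S.filter (fun j => i < j), mu i j
      = ∑ j, if i < j ∧ j ∈ S then mu i j else 0 := by
    intro i
    rw [← Finset.sum_filter]
    apply Finset.sum_congr _ (fun _ _ => rfl)
    ext j; simp [Finset.mem_filter, and_comm]
  calc ∑ i ∈ S, ∑ j ∈ S.filter (fun j => i < j), mu i j
      = ∑ i ∈ S, ∑ j, if i < j ∧ j ∈ S then mu i j else 0 :=
        Finset.sum_congr rfl (fun i _ => h1 i)
    _ = ∑ i, if i ∈ S then (∑ j, if i < j ∧ j ∈ S then mu i j else 0) else 0 := by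
        rw [Finset.sum_ite_mem, Finset.univ_inter]
    _ = ∑ i, ∑ j, if i < j ∧ i ∈ S ∧ j ∈ S then mu i j else 0 := by
        refine Finset.sum_congr rfl fun i _ => ?_
        by_cases hi : i ∈ S
        · simp only [hi, if_true]
          exact Finset.sum_congr rfl fun j _ => by
            by_cases h : i < j ∧ j ∈ S <;> simp_all
        · simp [hi]

lemma sum_pairs (n : ℕ) (S : Finset (Fin n)) (f : Fin n → Fin n → ℕ) :
    ∑ u ∈ S, ∑ v ∈ S, f u v =
      (∑ u ∈ S, ∑ v ∈ S.filter (fun v => u < v), (f u v + f v u)) + ∑ u ∈ S, f u u := by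
  have key : ∀ u ∈ S, ∑ v ∈ S, f u v =
      (∑ v ∈ S.filter (fun v => u < v), f u v)
      + ((∑ v ∈ S.filter (fun v => v < u), f u v) + f u u) := by
    intro u hu
    rw [← Finset.sum_filter_add_sum_filter_not S (fun v => u < v) (f u ·)]
    congr 1
    rw [← Finset.sum_filter_add_sum_filter_not (S.filter (fun v => ¬ u < v)) (fun v => v < u) (f u ·)]
    congr 1
    · apply Finset.sum_congr _ (fun _ _ => rfl)
      ext v; simp only [Finset.mem_filter]
      constructor
      · rintro ⟨⟨h1, _⟩, h2⟩; exact ⟨h1, h2⟩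
      · rintro ⟨h1, h2⟩; exact ⟨⟨h1, not_lt_of_gt h2⟩, h2⟩
    · have : (S.filter (fun v => ¬ u < v)).filter (fun v => ¬ v < u) = {u} := by
        ext v; simp only [Finset.mem_filter, Finset.mem_singleton]
        constructor
        · rintro ⟨⟨_, h1⟩, h2⟩; exact le_antisymm (not_lt.mp h1) (not_lt.mp h2)
        · rintro rfl; exact ⟨⟨hu, lt_irrefl _⟩, lt_irrefl _⟩
      rw [this, Finset.sum_singleton]
  rw [Finset.sum_congr rfl key]
  simp only [Finset.sum_add_distrib]
  have swap : ∑ u ∈ S, ∑ v ∈ S.filter (fun v => v < u), f u v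
      = ∑ u ∈ S, ∑ v ∈ S.filter (fun v => u < v), f v u := by
    rw [Finset.sum_comm' (t' := S) (s' := fun v => S.filter (fun u => v < u))]
    intro x y
    simp only [Finset.mem_filter]
    tauto
  rw [swap]
  ring

lemma edgesWithin_supermod (n : ℕ) (mu : Fin n → Fin n → ℕ) (S T : Finset (Fin n))
    (i j : Fin n) (hij : i < j) (hiT : i ∈ T) (hiS : i ∉ S) (hjS : j ∈ S) (hjT : j ∉ T) :
    edgesWithin n mu S + edgesWithin n mu T + mu i j
      ≤ edgesWithin n mu (S ∪ T) + edgesWithin n mu (S ∩ T) := by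
  simp only [edgesWithin_eq_sum_ite]
  have extra : mu i j = ∑ a, ∑ b, if a = i ∧ b = j then mu i j else 0 := by
    simp [ite_and, Finset.sum_ite_eq']
  rw [extra]
  have comb1 : (∑ a, ∑ b, ((if a < b ∧ a ∈ S ∧ b ∈ S then mu a b else 0)
      + (if a < b ∧ a ∈ T ∧ b ∈ T then mu a b else 0)
      + (if a = i ∧ b = j then mu i j else 0)))
      = (∑ a, ∑ b, if a < b ∧ a ∈ S ∧ b ∈ S then mu a b else 0)
      + (∑ a, ∑ b, if a < b ∧ a ∈ T ∧ b ∈ T then mu a b else 0)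
      + (∑ a, ∑ b, if a = i ∧ b = j then mu i j else 0) := by
    simp [Finset.sum_add_distrib]
  have comb2 : (∑ a : Fin n, ∑ b : Fin n,
      ((if a < b ∧ a ∈ S ∪ T ∧ b ∈ S ∪ T then mu a b else 0)
      + (if a < b ∧ a ∈ S ∩ T ∧ b ∈ S ∩ T then mu a b else 0)))
      = (∑ a, ∑ b, if a < b ∧ a ∈ S ∪ T ∧ b ∈ S ∪ T then mu a b else 0)
      + (∑ a, ∑ b, if a < b ∧ a ∈ S ∩ T ∧ b ∈ S ∩ T then mu a b else 0) := by
    simp [Finset.sum_add_distrib]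
  rw [← comb1, ← comb2]
  apply Finset.sum_le_sum; intro a _
  apply Finset.sum_le_sum; intro b _
  by_cases hab : a = i ∧ b = j
  · obtain ⟨rfl, rfl⟩ := hab
    simp only [if_pos (⟨rfl, rfl⟩ : a = a ∧ b = b)]
    have h1 : ¬ (a < b ∧ a ∈ S ∧ b ∈ S) := by tauto
    have h2 : ¬ (a < b ∧ a ∈ T ∧ b ∈ T) := by tauto
    have h3 : a < b ∧ a ∈ S ∪ T ∧ b ∈ S ∪ T := by
      exact ⟨hij, Finset.mem_union_right _ hiT, Finset.mem_union_left _ hjS⟩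
    rw [if_neg h1, if_neg h2, if_pos h3]
    simp
  · rw [if_neg hab, add_zero]
    by_cases h1 : a < b ∧ a ∈ S ∧ b ∈ S <;> by_cases h2 : a < b ∧ a ∈ T ∧ b ∈ T
    · have h3 : a < b ∧ a ∈ S ∪ T ∧ b ∈ S ∪ T := by
        exact ⟨h1.1, Finset.mem_union_left _ h1.2.1, Finset.mem_union_left _ h1.2.2⟩
      have h4 : a < b ∧ a ∈ S ∩ T ∧ b ∈ S ∩ T := by
        exact ⟨h1.1, Finset.mem_inter.mpr ⟨h1.2.1, h2.2.1⟩, Finset.mem_inter.mpr ⟨h1.2.2, h2.2.2⟩⟩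
      rw [if_pos h1, if_pos h2, if_pos h3, if_pos h4]
    · have h3 : a < b ∧ a ∈ S ∪ T ∧ b ∈ S ∪ T :=
        ⟨h1.1, Finset.mem_union_left _ h1.2.1, Finset.mem_union_left _ h1.2.2⟩
      rw [if_pos h1, if_neg h2, if_pos h3]; omega
    · have h3 : a < b ∧ a ∈ S ∪ T ∧ b ∈ S ∪ T :=
        ⟨h2.1, Finset.mem_union_right _ h2.2.1, Finset.mem_union_right _ h2.2.2⟩
      rw [if_neg h1, if_pos h2, if_pos h3]; omega
    · rw [if_neg h1, if_neg h2]; omega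

def muDec (n : ℕ) (mu : Fin n → Fin n → ℕ) (i j : Fin n) : Fin n → Fin n → ℕ :=
  fun a b => if (a = i ∧ b = j) ∨ (a = j ∧ b = i) then mu a b - 1 else mu a b

lemma muDec_base (n : ℕ) (mu : Fin n → Fin n → ℕ) (hsymm : ∀ i j, mu i j = mu j i)
    (i j v w : Fin n) (hij : i < j) (hpos : 0 < mu i j)
    (hvw : (v = i ∧ w = j) ∨ (v = j ∧ w = i)) (x y : Fin n) :
    muDec n mu i j x y + ((if x = w ∧ y = v then 1 else 0)
      + (if y = w ∧ x = v then 1 else 0)) = mu x y := by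
  have hne : i ≠ j := ne_of_lt hij
  have hmuji : 0 < mu j i := by rw [← hsymm]; exact hpos
  by_cases h1 : x = i <;> by_cases h2 : x = j <;>
    by_cases h3 : y = i <;> by_cases h4 : y = j <;>
    rcases hvw with ⟨rfl, rfl⟩ | ⟨rfl, rfl⟩ <;>
    simp_all [muDec] <;> omega

lemma edgesWithin_dec (n : ℕ) (mu : Fin n → Fin n → ℕ) (i j : Fin n) (hij : i < j)
    (hpos : 0 < mu i j) (S : Finset (Fin n)) :
    edgesWithin n (muDec n mu i j) S
      + (if i ∈ S ∧ j ∈ S then 1 else 0) = edgesWithin n mu S := by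
  unfold muDec
  simp only [edgesWithin_eq_sum_ite]
  rw [← Fintype.sum_prod_type'
    (f := fun a b => if a < b ∧ a ∈ S ∧ b ∈ S then (if (a = i ∧ b = j) ∨ (a = j ∧ b = i) then mu a b - 1 else mu a b) else 0)]
  rw [← Fintype.sum_prod_type' (f := fun a b => if a < b ∧ a ∈ S ∧ b ∈ S then mu a b else 0)]
  rw [← Finset.add_sum_erase Finset.univ _ (Finset.mem_univ ((i, j) : Fin n × Fin n)),
      ← Finset.add_sum_erase Finset.univ
        (fun p : Fin n × Fin n => if p.1 < p.2 ∧ p.1 ∈ S ∧ p.2 ∈ S then mu p.1 p.2 else 0)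
        (Finset.mem_univ ((i, j) : Fin n × Fin n))]
  have heq : ∀ p ∈ Finset.univ.erase ((i, j) : Fin n × Fin n),
      (if p.1 < p.2 ∧ p.1 ∈ S ∧ p.2 ∈ S then
        (if (p.1 = i ∧ p.2 = j) ∨ (p.1 = j ∧ p.2 = i) then mu p.1 p.2 - 1 else mu p.1 p.2) else 0)
      = (if p.1 < p.2 ∧ p.1 ∈ S ∧ p.2 ∈ S then mu p.1 p.2 else 0) := by
    intro p hp
    have hne : p ≠ (i, j) := Finset.ne_of_mem_erase hp
    by_cases hc : p.1 < p.2 ∧ p.1 ∈ S ∧ p.2 ∈ S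
    · rw [if_pos hc, if_pos hc]
      have : ¬ ((p.1 = i ∧ p.2 = j) ∨ (p.1 = j ∧ p.2 = i)) := by
        rintro (⟨h1, h2⟩ | ⟨h1, h2⟩)
        · exact hne (Prod.ext h1 h2)
        · subst h1; subst h2; exact absurd hij (not_lt_of_gt hc.1)
      rw [if_neg this]
    · rw [if_neg hc, if_neg hc]
  rw [Finset.sum_congr rfl heq]
  by_cases hS : i ∈ S ∧ j ∈ S
  · have hc : (i < j ∧ i ∈ S ∧ j ∈ S) := ⟨hij, hS⟩
    rw [if_pos hc, if_pos hc, if_pos hS]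
    split_ifs with h
    · simp only [show ((i,j) : Fin n × Fin n).1 = i from rfl,
        show ((i,j) : Fin n × Fin n).2 = j from rfl]
      omega
    · simp at h
  · have hc : ¬(i < j ∧ i ∈ S ∧ j ∈ S) := fun h => hS h.2
    rw [if_neg hc, if_neg hc, if_neg hS]
    omega

lemma hakimi (n : ℕ) (E : ℕ) : ∀ (mu : Fin n → Fin n → ℕ) (d : Fin n → ℕ),
    edgesWithin n mu Finset.univ = E →
    (∀ i j, mu i j = mu j i) → (∀ i, mu i i = 0) →
    (∑ v, d v) = edgesWithin n mu Finset.univ →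
    (∀ S : Finset (Fin n), edgesWithin n mu S ≤ ∑ v ∈ S, d v) →
    ∃ a : Fin n → Fin n → ℕ, (∀ i j, a i j + a j i = mu i j) ∧ ∀ v, (∑ u, a u v) = d v := by
  induction E using Nat.strong_induction_on with
  | _ E IH =>
  intro mu d hE hsymm hloop hsum hsub
  by_cases h0 : E = 0
  · -- base case: no edges
    subst h0
    have hmu : ∀ i j, mu i j = 0 := by
      have hz : ∀ i ∈ (Finset.univ : Finset (Fin n)),
          ∀ j ∈ Finset.univ.filter (fun j => i < j), mu i j = 0 := by
        have := hE
        unfold edgesWithin at this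
        intro i hi j hj
        have h1 := Finset.sum_eq_zero_iff.mp this i hi
        exact Finset.sum_eq_zero_iff.mp h1 j hj
      intro i j
      rcases lt_trichotomy i j with h | h | h
      · exact hz i (Finset.mem_univ i) j (by simp [h])
      · subst h; exact hloop i
      · rw [hsymm]; exact hz j (Finset.mem_univ j) i (by simp [h])
    have hd : ∀ v, d v = 0 := by
      intro v
      have : ∑ v, d v = 0 := by rw [hsum, hE]
      exact Finset.sum_eq_zero_iff.mp this v (Finset.mem_univ v)
    exact ⟨fun _ _ => 0, fun i j => by simp [hmu], fun v => by simp [hd]⟩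
  · -- inductive step
    have hEpos : 0 < E := Nat.pos_of_ne_zero h0
    -- find an edge i < j with mu i j > 0
    obtain ⟨i, _, hi⟩ := Finset.exists_ne_zero_of_sum_ne_zero
      (by rw [show (∑ i ∈ Finset.univ, ∑ j ∈ Finset.univ.filter (fun j => i < j), mu i j)
          = edgesWithin n mu Finset.univ from rfl, hE]; omega)
    obtain ⟨j, hjmem, hpos⟩ := Finset.exists_ne_zero_of_sum_ne_zero hi
    have hij : i < j := (Finset.mem_filter.mp hjmem).2
    have hpos : 0 < mu i j := Nat.pos_of_ne_zero hpos
    have hne : i ≠ j := ne_of_lt hij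
    -- dichotomy via submodularity
    have hside : (∀ S, j ∈ S → i ∉ S → edgesWithin n mu S + 1 ≤ ∑ v ∈ S, d v)
        ∨ (∀ S, i ∈ S → j ∉ S → edgesWithin n mu S + 1 ≤ ∑ v ∈ S, d v) := by
      by_contra hcon
      push_neg at hcon
      obtain ⟨⟨S, hjS, hiS, hSlt⟩, ⟨T, hiT, hjT, hTlt⟩⟩ := hcon
      have h1 := edgesWithin_supermod n mu S T i j hij hiT hiS hjS hjT
      have h2 := hsub (S ∪ T)
      have h3 := hsub (S ∩ T)
      have h4 : (∑ v ∈ S ∪ T, d v) + (∑ v ∈ S ∩ T, d v)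
          = (∑ v ∈ S, d v) + (∑ v ∈ T, d v) := Finset.sum_union_inter
      have h5 := hsub S
      have h6 := hsub T
      omega
    -- the common step, with v the head and w the tail of the new oriented edge
    have key : ∀ v w : Fin n, ((v = i ∧ w = j) ∨ (v = j ∧ w = i)) →
        (∀ S, v ∈ S → w ∉ S → edgesWithin n mu S + 1 ≤ ∑ x ∈ S, d x) →
        ∃ a : Fin n → Fin n → ℕ, (∀ i j, a i j + a j i = mu i j) ∧ ∀ v, (∑ u, a u v) = d v := by
      intro v w hvw htight
      have hvwne : v ≠ w := by
        rcases hvw with ⟨rfl, rfl⟩ | ⟨rfl, rfl⟩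
        · exact hne
        · exact hne.symm
      have hdv : 1 ≤ d v := by
        have h := htight {v} (Finset.mem_singleton_self v)
          (by simp [Ne.symm hvwne])
        simp only [Finset.sum_singleton] at h
        omega
      have hd' : True := trivial
      have dec := edgesWithin_dec n mu i j hij hpos
      have hdecuniv : edgesWithin n (muDec n mu i j) Finset.univ + 1 = E := by
        have := dec Finset.univ
        rw [if_pos ⟨Finset.mem_univ i, Finset.mem_univ j⟩] at this
        omega
      -- sums of d'
      have hsumS : ∀ S : Finset (Fin n), v ∈ S → (∑ x ∈ S, Function.update d v (d v - 1) x) + 1 = ∑ x ∈ S, d x := by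
        intro S hvS
        rw [Finset.sum_update_of_mem hvS, ← Finset.add_sum_erase S d hvS,
          Finset.erase_eq]
        omega
      have hsumS' : ∀ S : Finset (Fin n), v ∉ S → (∑ x ∈ S, Function.update d v (d v - 1) x) = ∑ x ∈ S, d x := by
        intro S hvS
        exact Finset.sum_congr rfl fun x hx =>
          Function.update_of_ne (by rintro rfl; exact hvS hx) _ _
      -- IH hypotheses for mu'
      have hsymm' : ∀ a b, muDec n mu i j a b = muDec n mu i j b a := by
        intro a b
        simp only [muDec]
        split_ifs with h1 h2 h2
        · rw [hsymm a b]
        · exact absurd (h1.elim (fun h => Or.inr ⟨h.2, h.1⟩) (fun h => Or.inl ⟨h.2, h.1⟩)) h2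
        · exact absurd (h2.elim (fun h => Or.inr ⟨h.2, h.1⟩) (fun h => Or.inl ⟨h.2, h.1⟩)) h1
        · exact hsymm a b
      have hloop' : ∀ k, muDec n mu i j k k = 0 := by
        intro k
        simp only [muDec]
        split_ifs with h1
        · rcases h1 with ⟨rfl, rfl⟩ | ⟨rfl, rfl⟩ <;> exact absurd hij (lt_irrefl _)
        · exact hloop k
      have hsum' : (∑ x, Function.update d v (d v - 1) x) = edgesWithin n (muDec n mu i j) Finset.univ := by
        have := hsumS Finset.univ (Finset.mem_univ v)
        omega
      have hsub' : ∀ S : Finset (Fin n), edgesWithin n (muDec n mu i j) S ≤ ∑ x ∈ S, Function.update d v (d v - 1) x := by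
        intro S
        have hle : edgesWithin n (muDec n mu i j) S ≤ edgesWithin n mu S := by
          rw [← dec S]; exact Nat.le_add_right _ _
        by_cases hvS : v ∈ S
        · have h1 := hsumS S hvS
          by_cases hwS : w ∈ S
          · have hij' : i ∈ S ∧ j ∈ S := by
              rcases hvw with ⟨rfl, rfl⟩ | ⟨rfl, rfl⟩ <;> exact ⟨‹_›, ‹_›⟩
            have h2 := dec S
            rw [if_pos hij'] at h2
            have := hsub S
            omega
          · have h2 := htight S hvS hwS
            omega
        · have h1 := hsumS' S hvS
          have hind : ¬ (i ∈ S ∧ j ∈ S) := by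
            rcases hvw with ⟨rfl, rfl⟩ | ⟨rfl, rfl⟩ <;> exact fun h => hvS (by tauto)
          have h2 := dec S
          rw [if_neg hind, add_zero] at h2
          have := hsub S
          omega
      obtain ⟨a', ha'or, ha'deg⟩ := IH (edgesWithin n (muDec n mu i j) Finset.univ) (by omega)
        (muDec n mu i j) (Function.update d v (d v - 1)) rfl hsymm' hloop' hsum' hsub'
      refine ⟨fun x y => a' x y + if x = w ∧ y = v then 1 else 0, ?_, ?_⟩
      · intro x y
        have h1 := ha'or x y
        have hbase := muDec_base n mu hsymm i j v w hij hpos hvw x y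
        show (a' x y + if x = w ∧ y = v then 1 else 0)
          + (a' y x + if y = w ∧ x = v then 1 else 0) = mu x y
        omega
      · intro y
        rw [Finset.sum_add_distrib, ha'deg y]
        have hind : (∑ u : Fin n, if u = w ∧ y = v then 1 else 0)
            = if y = v then 1 else 0 := by
          by_cases hy : y = v
          · simp [hy]
          · simp [hy]
        rw [hind]
        by_cases hy : y = v
        · subst hy; rw [Function.update_self, if_pos rfl]; omega
        · rw [Function.update_of_ne hy]; simp [hy]
    rcases hside with h | h
    · exact key j i (Or.inr ⟨rfl, rfl⟩) h
    · exact key i j (Or.inl ⟨rfl, rfl⟩) h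

/-- For a connected loopless multigraph `μ`, a divisor `D` is a break divisor if and
only if `D − 1_q` is orientable for every vertex `q`. -/
theorem breakDivisor_iff_orientable (n : ℕ) (mu : Fin n → Fin n → ℕ)
    (hsymm : ∀ i j, mu i j = mu j i) (hloop : ∀ i, mu i i = 0)
    (hconn : (SimpleGraph.fromRel (fun i j => 0 < mu i j)).Connected)
    (D : Fin n → ℤ) :
    IsBreakDivisorMulti n mu D ↔
      ∀ q : Fin n, IsOrientable n mu (fun v => D v - if v = q then 1 else 0) := by
  constructor
  · rintro ⟨hnn, hdeg, hsubB⟩ q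
    set d : Fin n → ℕ := fun v => (D v).toNat + (if v = q then 0 else 1) with hd
    have hcast : ∀ v, (d v : ℤ) = D v + 1 - (if v = q then 1 else 0) := by
      intro v
      have h0 := hnn v
      by_cases hv : v = q
      · subst hv; simp [hd]; omega
      · simp [hd, hv]
        omega
    have hsum : (∑ v, d v) = edgesWithin n mu Finset.univ := by
      have h1 : (∑ v, (d v : ℤ)) = (edgesWithin n mu Finset.univ : ℤ) := by
        calc (∑ v, (d v : ℤ)) = ∑ v, (D v + 1 - (if v = q then 1 else 0)) :=
              Finset.sum_congr rfl fun v _ => hcast v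
          _ = (∑ v, D v) + n - 1 := by
              rw [Finset.sum_sub_distrib, Finset.sum_add_distrib, Finset.sum_const,
                Finset.sum_ite_eq' Finset.univ q (fun _ => (1:ℤ)),
                if_pos (Finset.mem_univ q)]
              simp
          _ = (edgesWithin n mu Finset.univ : ℤ) := by rw [hdeg]; ring
      exact_mod_cast h1
    have hsub : ∀ S : Finset (Fin n), edgesWithin n mu S ≤ ∑ v ∈ S, d v := by
      intro S
      rcases S.eq_empty_or_nonempty with rfl | hS
      · simp [edgesWithin]
      · have h1 := hsubB S hS
        have h2 : (∑ v ∈ S, (d v : ℤ)) = (∑ v ∈ S, D v) + S.card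
            - (if q ∈ S then 1 else 0) := by
          calc (∑ v ∈ S, (d v : ℤ)) = ∑ v ∈ S, (D v + 1 - (if v = q then 1 else 0)) :=
                Finset.sum_congr rfl fun v _ => hcast v
            _ = _ := by
              rw [Finset.sum_sub_distrib, Finset.sum_add_distrib, Finset.sum_const,
                Finset.sum_ite_eq' S q (fun _ => (1:ℤ))]
              simp
        have h3 : (edgesWithin n mu S : ℤ) ≤ ∑ v ∈ S, (d v : ℤ) := by
          rw [h2]
          by_cases hq : q ∈ S <;> simp [hq] <;> linarith
        exact_mod_cast h3
    obtain ⟨a, ha, hdeg'⟩ := hakimi n (edgesWithin n mu Finset.univ) mu d rfl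
      hsymm hloop hsum hsub
    refine ⟨a, ha, fun v => ?_⟩
    have h1 : (∑ u, (a u v : ℤ)) = (d v : ℤ) := by
      rw [← Nat.cast_sum, hdeg' v]
    rw [h1, hcast v]
    ring
  · intro h
    -- common facts about orientations
    have horient : ∀ (a : Fin n → Fin n → ℕ), (∀ i j, a i j + a j i = mu i j) →
        ∀ S : Finset (Fin n), edgesWithin n mu S ≤ ∑ v ∈ S, ∑ u, a u v := by
      intro a ha S
      have hdiag : ∀ u, a u u = 0 := by
        intro u
        have := ha u u
        have h2 := hloop u
        omega
      have h1 : ∑ v ∈ S, ∑ u ∈ S, a u v ≤ ∑ v ∈ S, ∑ u, a u v :=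
        Finset.sum_le_sum fun v _ =>
          Finset.sum_le_sum_of_subset (Finset.subset_univ S)
      have h2 : ∑ v ∈ S, ∑ u ∈ S, a u v = edgesWithin n mu S := by
        rw [sum_pairs n S (fun u v => a v u)]
        have h3 : ∀ u ∈ S, ∀ v ∈ S.filter (fun v => u < v), a v u + a u v = mu u v := by
          intro u _ v _
          rw [ha v u, hsymm v u]
        unfold edgesWithin
        rw [Finset.sum_congr rfl fun u hu => Finset.sum_congr rfl (h3 u hu)]
        simp [hdiag]
      omega
    have horient2 : ∀ (a : Fin n → Fin n → ℕ), (∀ i j, a i j + a j i = mu i j) →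
        (∑ v, ∑ u, a u v) = edgesWithin n mu Finset.univ := by
      intro a ha
      have hdiag : ∀ u, a u u = 0 := by
        intro u
        have := ha u u
        have h2 := hloop u
        omega
      rw [sum_pairs n Finset.univ (fun u v => a v u)]
      have h3 : ∀ u ∈ (Finset.univ : Finset (Fin n)),
          ∀ v ∈ Finset.univ.filter (fun v => u < v), a v u + a u v = mu u v := by
        intro u _ v _
        rw [ha v u, hsymm v u]
      unfold edgesWithin
      rw [Finset.sum_congr rfl fun u hu => Finset.sum_congr rfl (h3 u hu)]
      simp [hdiag]
    refine ⟨?_, ?_, ?_⟩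
    · intro v
      obtain ⟨a, ha, hv⟩ := h v
      have h1 := hv v
      simp at h1
      have h2 : (0:ℤ) ≤ ∑ u, (a u v : ℤ) :=
        Finset.sum_nonneg fun u _ => Int.natCast_nonneg _
      linarith
    · obtain ⟨q⟩ := hconn.nonempty
      obtain ⟨a, ha, hv⟩ := h q
      have h1 : ∑ v, (D v - if v = q then 1 else 0) = ∑ v, ((∑ u, (a u v : ℤ)) - 1) :=
        Finset.sum_congr rfl fun v _ => hv v
      rw [Finset.sum_sub_distrib, Finset.sum_sub_distrib,
        Finset.sum_ite_eq' Finset.univ q (fun _ => (1:ℤ)), if_pos (Finset.mem_univ q),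
        Finset.sum_const] at h1
      have h2 : (∑ v, ∑ u, (a u v : ℤ)) = (edgesWithin n mu Finset.univ : ℤ) := by
        rw [← horient2 a ha]
        push_cast
        rfl
      rw [h2] at h1
      simp only [nsmul_eq_mul, mul_one, Finset.card_univ, Fintype.card_fin] at h1
      linarith
    · intro S hS
      obtain ⟨q, hqS⟩ := hS
      obtain ⟨a, ha, hv⟩ := h q
      have h1 : ∑ v ∈ S, (D v - if v = q then 1 else 0)
          = ∑ v ∈ S, ((∑ u, (a u v : ℤ)) - 1) :=
        Finset.sum_congr rfl fun v _ => hv v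
      rw [Finset.sum_sub_distrib, Finset.sum_sub_distrib,
        Finset.sum_ite_eq' S q (fun _ => (1:ℤ)), if_pos hqS, Finset.sum_const] at h1
      have h2 : (edgesWithin n mu S : ℤ) ≤ ∑ v ∈ S, ∑ u, (a u v : ℤ) := by
        have := horient a ha S
        have hcast : (∑ v ∈ S, ∑ u, (a u v : ℤ)) = ((∑ v ∈ S, ∑ u, a u v : ℕ) : ℤ) := by
          push_cast; rfl
        rw [hcast]
        exact_mod_cast this
      simp only [nsmul_eq_mul, mul_one] at h1
      linarith
end

section
/- Let m and n be positive integers with n ≥ 2, and let d be a positive divisor of n. Set g = m·n·(n−1)/2 − n + 1. If m is odd, n ≡ 2 (mod 4), and d is even, then gcd(d, g) = 2; in all other cases gcd(d, g) = 1. -/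
lemma Int.gcd_add_mul_of_dvd {d n : ℤ} (h : d ∣ n) (x y : ℤ) :
    Int.gcd d (x + n * y) = Int.gcd d x := by
  obtain ⟨c, rfl⟩ := h
  rw [mul_assoc, Int.gcd_add_mul_left_right]

lemma Int.gcd_one_sub_mul_dvd_two {d q : ℤ} (h : d ∣ 2 * q) (x : ℤ) :
    Int.gcd d (1 - x * q) ∣ 2 := by
  have hq : IsCoprime q (1 - x * q) := ⟨x, 1, by ring⟩
  have hcop : IsCoprime (Int.gcd d (1 - x * q) : ℤ) q :=
    (hq.of_isCoprime_of_dvd_right (Int.gcd_dvd_right _ _)).symm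
  exact Int.natCast_dvd_natCast.mp
    (hcop.dvd_of_dvd_mul_right ((Int.gcd_dvd_left _ _).trans h))

lemma Int.two_dvd_gcd_iff {a b : ℤ} : 2 ∣ Int.gcd a b ↔ Even a ∧ Even b := by
  simp only [even_iff_two_dvd]
  exact ⟨fun h => ⟨(Int.natCast_dvd_natCast.mpr h).trans (Int.gcd_dvd_left _ _),
    (Int.natCast_dvd_natCast.mpr h).trans (Int.gcd_dvd_right _ _)⟩,
    fun ⟨ha, hb⟩ => Int.dvd_gcd ha hb⟩

lemma Int.gcd_eq_ite_of_dvd_two {a b : ℤ} (h : Int.gcd a b ∣ 2) :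
    Int.gcd a b = if Even a ∧ Even b then 2 else 1 := by
  rcases (Nat.dvd_prime Nat.prime_two).mp h with h1 | h2
  · rw [if_neg (by rw [← Int.two_dvd_gcd_iff, h1]; decide), h1]
  · rw [if_pos (by rw [← Int.two_dvd_gcd_iff, h2]), h2]

lemma genusZ_two_mul (m q : ℕ) :
    genusZ m (2 * q) = 1 - m * q + ((2 * q : ℕ) : ℤ) * (m * q - 1) := by
  have h : (m : ℤ) * (2 * q : ℕ) * ((2 * q : ℕ) - 1) = 2 * (m * q * (2 * q - 1)) := by
    push_cast; ring
  rw [genusZ, h, Int.mul_ediv_cancel_left _ two_ne_zero]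
  push_cast; ring

lemma genusZ_two_mul_add_one (m j : ℕ) :
    genusZ m (2 * j + 1) = 1 + ((2 * j + 1 : ℕ) : ℤ) * (m * j - 1) := by
  have h : (m : ℤ) * (2 * j + 1 : ℕ) * ((2 * j + 1 : ℕ) - 1) = 2 * (m * (2 * j + 1) * j) := by
    push_cast; ring
  rw [genusZ, h, Int.mul_ediv_cancel_left _ two_ne_zero]
  push_cast; ring

theorem gcd_genus_general (m n d : ℕ) (hd : d ∣ n) :
    Int.gcd (d : ℤ) (genusZ m n) =
      if Odd m ∧ n % 4 = 2 ∧ Even d then 2 else 1 := by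
  have hdn : (d : ℤ) ∣ n := Int.natCast_dvd_natCast.mpr hd
  obtain ⟨q, rfl | rfl⟩ := Nat.even_or_odd' n
  · have hdq : (d : ℤ) ∣ 2 * q := by exact_mod_cast hdn
    rw [genusZ_two_mul, Int.gcd_add_mul_of_dvd hdn,
      Int.gcd_eq_ite_of_dvd_two (Int.gcd_one_sub_mul_dvd_two hdq _)]
    refine if_congr ?_ rfl rfl
    have hq : Odd q ↔ 2 * q % 4 = 2 := by rw [Nat.odd_iff]; omega
    simp only [Int.even_coe_nat, Int.even_sub, Int.not_even_one, Int.even_mul, false_iff,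
      not_or, Nat.not_even_iff_odd, ← hq]
    tauto
  · rw [genusZ_two_mul_add_one, Int.gcd_add_mul_of_dvd hdn, Int.gcd_one_right,
      if_neg (by omega)]

/-- For a positive divisor `d` of `n`: if `m` is odd, `n ≡ 2 (mod 4)` and `d` is even,
then `gcd(d, g(m,n)) = 2`; in all other cases `gcd(d, g(m,n)) = 1`. -/
theorem gcd_genus (m n d : ℕ) (hm : 0 < m) (hn : 2 ≤ n) (hd : d ∣ n) (hd0 : 0 < d) :
    Int.gcd (d : ℤ) (genusZ m n) =
      if Odd m ∧ n % 4 = 2 ∧ Even d then 2 else 1 :=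
  gcd_genus_general m n d hd
end

section
/- Let m and n be positive integers, and let T be the number of weakly decreasing tuples (x_1 ≥ x_2 ≥ … ≥ x_n) with entries in {0,1,…,mn−1} such that x_1 + … + x_n ≡ g(m,n) (mod mn). Then n·T = ∑_{d | n} (−1)^(m(n+d)) · μ(n/d) · C((m+1)d − 1, md), where the sum is over positive divisors d of n, μ is the Möbius function, and C(·,·) is a binomial coefficient. (T is the number of orbits of the coordinate-permutation action of the symmetric group S_n on D(m,n).) -/
open Finset ArithmeticFunction
open scoped ArithmeticFunction.Moebius

section AntitoneTuples

variable (α : Type*) [LinearOrder α] (n : ℕ)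

def antitoneEquivSym : {x : Fin n → α // Antitone x} ≃ Sym α n where
  toFun x := ⟨List.ofFn x.1, by simp⟩
  invFun s := ⟨fun i => (s.1.sort (· ≥ ·)).get (i.cast (by simp)),
    fun _ _ hij => (Multiset.pairwise_sort _ _).sortedGE.antitone_get hij⟩
  left_inv x := by
    have hsort : (List.ofFn x.1 : Multiset α).sort (· ≥ ·) = List.ofFn x.1 :=
      List.Perm.eq_of_sortedGE (Multiset.pairwise_sort _ _).sortedGE x.2.sortedGE_ofFn
        (Multiset.coe_eq_coe.mp (Multiset.sort_eq _ _))
    ext i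
    exact (List.get_of_eq hsort _).trans (List.get_ofFn _ _)
  right_inv s := by
    ext1
    change ((List.ofFn fun i => (s.1.sort (· ≥ ·)).get (i.cast _) : List α) : Multiset α) = s.1
    rw [← List.ofFn_congr (by simp) (List.get _), List.ofFn_get, Multiset.sort_eq]

variable [Fintype α] [DecidableEq α]

noncomputable def antitoneEquivFinsuppAntidiag :
    {x : Fin n → α // Antitone x} ≃ (univ : Finset α).finsuppAntidiag n :=
  (antitoneEquivSym α n).trans <| (Sym.equivNatSum α n).trans <|
    Equiv.subtypeEquivRight fun l => by simp [mem_finsuppAntidiag, Finsupp.sum_fintype]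

theorem sum_antitoneEquivFinsuppAntidiag {M : Type*} [AddCommMonoid M] (f : α → M)
    (x : {x : Fin n → α // Antitone x}) :
    ∑ a, (antitoneEquivFinsuppAntidiag α n x : α →₀ ℕ) a • f a = ∑ i, f (x.1 i) := by
  change ∑ a, Multiset.count a (List.ofFn x.1) • f a = _
  have hsum : ∑ i, f (x.1 i) = ((List.ofFn x.1 : Multiset α).map f).sum := by
    simp [List.sum_ofFn]
  rw [hsum, Finset.sum_multiset_map_count]
  exact (sum_subset (subset_univ _) fun a _ ha => by
    rw [Multiset.count_eq_zero_of_notMem (by simpa using ha), zero_smul]).symm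

theorem card_antitone_filter_sum {M : Type*} [AddCommMonoid M] (f : α → M) (P : M → Prop)
    [DecidablePred P] :
    Nat.card {x : Fin n → α // Antitone x ∧ P (∑ i, f (x i))} =
      #{l ∈ (univ : Finset α).finsuppAntidiag n | P (∑ a, l a • f a)} := by
  calc Nat.card {x : Fin n → α // Antitone x ∧ P (∑ i, f (x i))}
      = Nat.card {x : {x : Fin n → α // Antitone x} // P (∑ i, f (x.1 i))} :=
        Nat.card_congr (Equiv.subtypeSubtypeEquivSubtypeInter _ _).symm
    _ = Nat.card {l : (univ : Finset α).finsuppAntidiag n // P (∑ a, l.1 a • f a)} :=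
        Nat.card_congr <| (antitoneEquivFinsuppAntidiag α n).subtypeEquiv fun x => by
          rw [sum_antitoneEquivFinsuppAntidiag]
    _ = _ := by
      rw [← Nat.card_eq_finsetCard]
      exact Nat.card_congr <| (Equiv.subtypeSubtypeEquivSubtypeInter
        (· ∈ (univ : Finset α).finsuppAntidiag n) fun l => P (∑ a, l a • f a)).trans
        (Equiv.subtypeEquivRight fun l => by rw [mem_filter])

end AntitoneTuples

namespace PowerSeries

variable {R : Type*} [CommRing R]

theorem mk_pow_mul_one_sub_C_mul_X (a : R) : (mk fun k => a ^ k) * (1 - C a * X) = 1 := by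
  have hmk : (mk fun k => a ^ k) = rescale a (mk 1) := by simp [rescale_mk]
  rw [hmk, ← rescale_X, ← map_one (rescale a), ← map_sub, ← map_mul, mk_one_mul_one_sub_eq_one]

theorem coeff_eq_sum_finsuppAntidiag_of_mul_prod_eq_one {ι : Type*} [DecidableEq ι]
    (s : Finset ι) (a : ι → R) {P : R⟦X⟧} (hP : P * ∏ i ∈ s, (1 - C (a i) * X) = 1) (n : ℕ) :
    coeff n P = ∑ l ∈ s.finsuppAntidiag n, ∏ i ∈ s, a i ^ l i := by
  have hgeom : P = ∏ i ∈ s, mk fun k => a i ^ k := by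
    calc P = P * ∏ i ∈ s, ((1 - C (a i) * X) * mk fun k => a i ^ k) := by
          rw [prod_congr rfl fun i _ => by rw [mul_comm, mk_pow_mul_one_sub_C_mul_X],
            prod_const_one, mul_one]
      _ = ∏ i ∈ s, mk fun k => a i ^ k := by rw [prod_mul_distrib, ← mul_assoc, hP, one_mul]
  simp [hgeom, coeff_prod]

end PowerSeries

section

open PowerSeries

theorem IsPrimitiveRoot.prod_one_sub_C_pow_mul_X {R : Type*} [CommRing R] [IsDomain R] {q : R}
    {e : ℕ} (hq : IsPrimitiveRoot q e) (he : 0 < e) :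
    ∏ i ∈ range e, (1 - C (q ^ i) * X : R⟦X⟧) = 1 - X ^ e := by
  -- factor `Y ^ e - X ^ e` in `R⟦X⟧[Y]` and set `Y = 1`
  have h := X_pow_sub_C_eq_prod (hq.map_of_injective (f := C (R := R)) C_injective) he
    (α := (X : R⟦X⟧)) rfl
  simpa [Polynomial.eval_prod] using (congrArg (Polynomial.eval 1) h).symm

theorem IsPrimitiveRoot.prod_range_mul_one_sub_C_pow_mul_X {R : Type*} [CommRing R] [IsDomain R]
    {q : R} {e : ℕ} (hq : IsPrimitiveRoot q e) (he : 0 < e) (M : ℕ) :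
    ∏ i ∈ range (e * M), (1 - C (q ^ i) * X : R⟦X⟧) = (1 - X ^ e) ^ M := by
  induction M with
  | zero => simp
  | succ M ih =>
    rw [Nat.mul_succ, prod_range_add, ih, pow_succ, ← hq.prod_one_sub_C_pow_mul_X he]
    congr 1
    refine prod_congr rfl fun i _ => ?_
    rw [pow_add, pow_mul, hq.pow_eq_one, one_pow, one_mul]

theorem IsPrimitiveRoot.sum_finsuppAntidiag_pow_weight {R : Type*} [CommRing R] [IsDomain R]
    {q : R} {e N : ℕ} (hq : IsPrimitiveRoot q e) (heN : e ∣ N) (hN : 0 < N) (n : ℕ) :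
    ∑ l ∈ (univ : Finset (Fin N)).finsuppAntidiag n, q ^ (∑ a, l a * (a : ℕ)) =
      if e ∣ n then ((N / e - 1 + n / e).choose (N / e - 1) : R) else 0 := by
  have he : 0 < e := Nat.pos_of_dvd_of_pos heN hN
  have hM : 0 < N / e := Nat.div_pos (Nat.le_of_dvd hN heN) he
  set P : R⟦X⟧ := expand e he.ne' (invOneSubPow R (N / e)).val
  have hP : P * ∏ a : Fin N, (1 - C (q ^ (a : ℕ)) * X) = 1 := by
    rw [Fin.prod_univ_eq_prod_range (fun i => 1 - C (q ^ i) * X), ← Nat.mul_div_cancel' heN,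
      hq.prod_range_mul_one_sub_C_pow_mul_X he]
    have h := congrArg (expand e he.ne') (invOneSubPow R (N / e)).val_inv
    rwa [invOneSubPow_inv_eq_one_sub_pow, map_mul, map_pow, map_sub, map_one, expand_X] at h
  have hcoeff := coeff_eq_sum_finsuppAntidiag_of_mul_prod_eq_one _ _ hP n
  rw [coeff_expand, invOneSubPow_val_eq_mk_sub_one_add_choose_of_pos _ _ hM, coeff_mk] at hcoeff
  rw [hcoeff]
  refine sum_congr rfl fun l _ => ?_
  rw [← prod_pow_eq_pow_sum]
  exact prod_congr rfl fun a _ => by rw [← pow_mul, mul_comm]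

end

namespace IsPrimitiveRoot

variable {K : Type*} [Field K] {z : K} {N : ℕ}

theorem sum_range_zpow_mul (hz : IsPrimitiveRoot z N) (k : ℤ) :
    ∑ j ∈ range N, z ^ ((j : ℤ) * k) = if (N : ℤ) ∣ k then (N : K) else 0 := by
  simp_rw [mul_comm _ k, zpow_mul, zpow_natCast]
  split_ifs with h
  · simp [(hz.zpow_eq_one_iff_dvd k).mpr h]
  · have hne : z ^ k ≠ 1 := mt (hz.zpow_eq_one_iff_dvd k).mp h
    rw [geom_sum_eq hne, ← zpow_natCast, ← zpow_mul, mul_comm, zpow_mul, zpow_natCast,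
      hz.pow_eq_one, one_zpow, sub_self, zero_div]

theorem natCast_mul_card_filter_modEq (hz : IsPrimitiveRoot z N) (hN : 0 < N) {β : Type*}
    (s : Finset β) (w : β → ℤ) (g : ℤ) :
    (N * #{b ∈ s | w b ≡ g [ZMOD N]} : K) =
      ∑ j ∈ range N, z ^ (-((j : ℤ) * g)) * ∑ b ∈ s, z ^ ((j : ℤ) * w b) := by
  have hz0 : z ≠ 0 := hz.ne_zero hN.ne'
  simp_rw [mul_sum, ← zpow_add₀ hz0, neg_add_eq_sub, ← mul_sub]
  rw [sum_comm, card_filter, Nat.cast_sum, mul_sum]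
  refine sum_congr rfl fun b _ => ?_
  have hiff : w b ≡ g [ZMOD N] ↔ (N : ℤ) ∣ w b - g := Int.modEq_iff_dvd.trans dvd_sub_comm
  simp only [hz.sum_range_zpow_mul, hiff]
  split_ifs <;> simp

theorem sum_filter_orderOf_pow_dvd (hz : IsPrimitiveRoot z N) (hN : 0 < N) {f : ℕ} (hf : 0 < f)
    (hfN : f ∣ N) (g : ℤ) :
    ∑ j ∈ range N with orderOf (z ^ j) ∣ f, z ^ (-((j : ℤ) * g)) =
      if (f : ℤ) ∣ g then (f : K) else 0 := by
  have hNf : 0 < N / f := Nat.div_pos (Nat.le_of_dvd hN hfN) hf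
  have himage : (range N).filter (fun j => orderOf (z ^ j) ∣ f) = (range f).image (N / f * ·) := by
    ext j
    simp only [mem_filter, mem_range, mem_image, orderOf_dvd_iff_pow_eq_one, ← pow_mul,
      hz.pow_eq_one_iff_dvd]
    obtain ⟨k, rfl⟩ := hfN
    rw [Nat.mul_div_cancel_left _ hf, mul_comm j, Nat.mul_dvd_mul_iff_left hf]
    constructor
    · rintro ⟨hj, a, rfl⟩
      exact ⟨a, lt_of_mul_lt_mul_left (by linarith) (Nat.zero_le k), rfl⟩
    · rintro ⟨a, ha, rfl⟩
      exact ⟨by nlinarith, dvd_mul_right k a⟩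
  rw [himage, sum_image fun a _ b _ h => Nat.eq_of_mul_eq_mul_left hNf h]
  have hzf : IsPrimitiveRoot (z ^ (N / f)) f := by
    simpa [Nat.div_div_self hfN hN.ne'] using hz.pow_of_dvd hNf.ne' (Nat.div_dvd_of_dvd hfN)
  have horth := hzf.sum_range_zpow_mul (-g)
  simp_rw [dvd_neg] at horth
  rw [← horth]
  refine sum_congr rfl fun t _ => ?_
  rw [← zpow_natCast, ← zpow_mul]
  congr 1
  push_cast
  ring

theorem sum_filter_orderOf_pow_eq (hz : IsPrimitiveRoot z N) (hN : 0 < N) {f : ℕ} (hf : 0 < f)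
    (hfN : f ∣ N) (g : ℤ) :
    ∑ j ∈ range N with orderOf (z ^ j) = f, z ^ (-((j : ℤ) * g)) =
      ∑ x ∈ f.divisorsAntidiagonal, (μ x.1 : K) * if (x.2 : ℤ) ∣ g then (x.2 : K) else 0 := by
  refine ((sum_eq_iff_sum_mul_moebius_eq_on (R := K)
    (f := fun f => ∑ j ∈ range N with orderOf (z ^ j) = f, z ^ (-((j : ℤ) * g)))
    (g := fun f => if (f : ℤ) ∣ g then (f : K) else 0)
    {f | f ∣ N} fun _ _ h h' => h.trans h').mp
    (fun e he heN => ?_) f hf hfN).symm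
  rw [sum_fiberwise_eq_sum_filter, ← hz.sum_filter_orderOf_pow_dvd hN he heN]
  simp only [Nat.mem_divisors, he.ne', ne_eq, not_false_eq_true, and_true]

end IsPrimitiveRoot

theorem natCast_mul_card_finsuppAntidiag_filter_modEq {N n : ℕ} (hN : 0 < N) (hnN : n ∣ N)
    (g : ℤ) :
    (N : ℤ) * #{l ∈ (univ : Finset (Fin N)).finsuppAntidiag n |
        ∑ a : Fin N, l a • ((a : ℕ) : ℤ) ≡ g [ZMOD N]} =
      ∑ f ∈ n.divisors, ((N / f - 1 + n / f).choose (N / f - 1) : ℤ) *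
        ∑ x ∈ f.divisorsAntidiagonal, μ x.1 * if (x.2 : ℤ) ∣ g then (x.2 : ℤ) else 0 := by
  obtain ⟨z, hz⟩ : ∃ z : ℂ, IsPrimitiveRoot z N := ⟨_, Complex.isPrimitiveRoot_exp N hN.ne'⟩
  have hn : n ≠ 0 := by rintro rfl; exact hN.ne' (zero_dvd_iff.mp hnN)
  have hinner : ∀ j : ℕ, ∑ l ∈ (univ : Finset (Fin N)).finsuppAntidiag n,
      z ^ ((j : ℤ) * ∑ a, l a • ((a : ℕ) : ℤ)) =
        ∑ f ∈ n.divisors, if orderOf (z ^ j) = f then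
          ((N / f - 1 + n / f).choose (N / f - 1) : ℂ) else 0 := by
    intro j
    have hdvd : orderOf (z ^ j) ∣ N := orderOf_dvd_of_pow_eq_one <| by
      rw [← pow_mul, mul_comm, pow_mul, hz.pow_eq_one, one_pow]
    simp only [sum_ite_eq, Nat.mem_divisors, hn, ne_eq, not_false_eq_true, and_true]
    rw [← (IsPrimitiveRoot.orderOf (z ^ j)).sum_finsuppAntidiag_pow_weight hdvd hN n]
    refine sum_congr rfl fun l _ => ?_
    have hw : ∑ a, l a • ((a : ℕ) : ℤ) = ((∑ a : Fin N, l a * (a : ℕ) : ℕ) : ℤ) := by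
      push_cast
      simp
    rw [hw, ← Nat.cast_mul, zpow_natCast, pow_mul]
  apply Int.cast_injective (α := ℂ)
  push_cast
  rw [hz.natCast_mul_card_filter_modEq hN]
  simp_rw [hinner, mul_sum]
  rw [sum_comm]
  refine sum_congr rfl fun f hf => ?_
  have hfN : f ∣ N := (Nat.dvd_of_mem_divisors hf).trans hnN
  rw [← mul_sum, ← hz.sum_filter_orderOf_pow_eq hN (Nat.pos_of_mem_divisors hf) hfN g,
    sum_filter, mul_sum]
  refine sum_congr rfl fun j _ => ?_
  split_ifs <;> ring

theorem Nat.sum_divisorsAntidiagonal_of_dvd_prime {M : Type*} [AddCommMonoid M] {p f : ℕ}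
    (hp : p.Prime) (hf : f ≠ 0) (φ : ℕ → ℕ → M)
    (hφ : ∀ b ∈ f.divisors, ¬b ∣ p → φ (f / b) b = 0) :
    ∑ x ∈ f.divisorsAntidiagonal, φ x.1 x.2 = φ f 1 + if p ∣ f then φ (f / p) p else 0 := by
  rw [Nat.sum_divisorsAntidiagonal',
    ← sum_filter_of_ne (p := (· ∣ p)) fun b hb h => not_not.mp (mt (hφ b hb) h)]
  have hgcd : f.divisors.filter (· ∣ p) = (f.gcd p).divisors := by
    ext b
    simp [Nat.dvd_gcd_iff, hf]
  rw [hgcd]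
  split_ifs with hpf
  · rw [Nat.gcd_eq_right hpf, hp.divisors, sum_pair hp.one_lt.ne, Nat.div_one]
  · rw [(Nat.coprime_comm.mp (hp.coprime_iff_not_dvd.mpr hpf)).gcd_eq_one, Nat.divisors_one,
      sum_singleton, Nat.div_one, add_zero]

theorem two_mul_genusZ (m n : ℕ) : 2 * genusZ m n = ((n : ℤ) - 1) * ((m : ℤ) * n - 2) := by
  have h2 : (2 : ℤ) ∣ m * n * (n - 1) :=
    mul_assoc (m : ℤ) n (n - 1) ▸ dvd_mul_of_dvd_right (Int.even_mul_pred_self n).two_dvd _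
  rw [genusZ, mul_add, mul_sub, Int.mul_ediv_cancel' h2]
  ring

theorem dvd_two_of_dvd_genusZ {m n b : ℕ} (hb : b ∣ n) (hg : (b : ℤ) ∣ genusZ m n) : b ∣ 2 := by
  have h : (2 : ℤ) = 2 * genusZ m n - n * (m * n - m - 2) := by rw [two_mul_genusZ]; ring
  refine Int.natCast_dvd_natCast.mp ?_
  rw [Nat.cast_ofNat, h]
  exact dvd_sub (dvd_mul_of_dvd_right hg 2) (dvd_mul_of_dvd_left (Int.natCast_dvd_natCast.mpr hb) _)

theorem two_dvd_genusZ_two_mul_iff (m u : ℕ) :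
    (2 : ℤ) ∣ genusZ m (2 * u) ↔ Odd m ∧ Odd u := by
  have h : genusZ m (2 * u) = (2 * u - 1) * (m * u - 1) := by
    have := two_mul_genusZ m (2 * u)
    push_cast at this
    linarith
  rw [h, ← even_iff_two_dvd]
  simp [Int.even_mul, parity_simps, Int.odd_mul]

theorem neg_one_pow_mul_moebius_of_two_dvd_genusZ {m k d : ℕ}
    (hg : (2 : ℤ) ∣ genusZ m (2 * k * d)) :
    (-1) ^ (m * (2 * k * d + d)) * μ (2 * k) = μ (2 * k) + μ k * 2 := by
  rw [mul_assoc, two_dvd_genusZ_two_mul_iff, Nat.odd_mul] at hg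
  obtain ⟨hm, hk, hd⟩ := hg
  have hμ : μ (2 * k) = -μ k := by
    rw [isMultiplicative_moebius.map_mul_of_coprime (Nat.coprime_two_left.mpr hk),
      moebius_apply_prime Nat.prime_two, neg_one_mul]
  have hsign : Odd (m * (2 * k * d + d)) :=
    Nat.odd_mul.mpr ⟨hm, ((even_two.mul_right k).mul_right d).add_odd hd⟩
  rw [hμ, hsign.neg_one_pow]
  ring

theorem neg_one_pow_mul_moebius_of_not_two_dvd_genusZ {m f d : ℕ}
    (hg : ¬(2 ∣ f ∧ (2 : ℤ) ∣ genusZ m (f * d))) :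
    (-1) ^ (m * (f * d + d)) * μ f = μ f := by
  rcases Nat.even_or_odd (m * (f * d + d)) with he | ho
  · rw [he.neg_one_pow, one_mul]
  obtain ⟨hm, hfd⟩ := Nat.odd_mul.mp ho
  obtain ⟨hd, hf1⟩ := Nat.odd_mul.mp (show Odd (d * (f + 1)) by convert hfd using 1; ring)
  obtain ⟨k, rfl⟩ := (Nat.not_odd_iff_even.mp (Nat.odd_add_one.mp hf1)).two_dvd
  have hk : Even k := by
    refine Nat.not_odd_iff_even.mp fun hk => hg ⟨dvd_mul_right 2 k, ?_⟩
    rw [mul_assoc, two_dvd_genusZ_two_mul_iff]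
    exact ⟨hm, Nat.odd_mul.mpr ⟨hk, hd⟩⟩
  obtain ⟨j, rfl⟩ := hk
  rw [moebius_eq_zero_of_not_squarefree fun hsq => ?_, mul_zero]
  have h4 := hsq 2 ⟨j, by ring⟩
  norm_num at h4

theorem sum_divisorsAntidiagonal_moebius_mul_ite_dvd_genusZ {m n f : ℕ} (hn : 0 < n)
    (hf : f ∣ n) :
    ∑ x ∈ f.divisorsAntidiagonal, (μ x.1 : ℤ) * (if (x.2 : ℤ) ∣ genusZ m n then (x.2 : ℤ) else 0) =
      (-1) ^ (m * (n + n / f)) * μ f := by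
  have hf0 : f ≠ 0 := ne_zero_of_dvd_ne_zero hn.ne' hf
  rw [Nat.sum_divisorsAntidiagonal_of_dvd_prime Nat.prime_two hf0
    (fun a b => (μ a : ℤ) * if (b : ℤ) ∣ genusZ m n then (b : ℤ) else 0) fun b hb h2 => by
      rw [if_neg (mt (dvd_two_of_dvd_genusZ ((Nat.dvd_of_mem_divisors hb).trans hf)) h2),
        mul_zero]]
  simp only [Nat.cast_one, one_dvd, if_true, mul_one, Nat.cast_ofNat]
  obtain ⟨d, rfl⟩ := hf
  rw [Nat.mul_div_cancel_left d (Nat.pos_of_ne_zero hf0)]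
  by_cases h2 : 2 ∣ f ∧ (2 : ℤ) ∣ genusZ m (f * d)
  · obtain ⟨⟨k, rfl⟩, hg⟩ := h2
    rw [if_pos (dvd_mul_right 2 k), if_pos hg, Nat.mul_div_cancel_left k two_pos,
      neg_one_pow_mul_moebius_of_two_dvd_genusZ hg]
  · rw [neg_one_pow_mul_moebius_of_not_two_dvd_genusZ h2, add_eq_left]
    split_ifs with hf2 hg
    · exact absurd ⟨hf2, hg⟩ h2
    all_goals simp

theorem Nat.choose_sub_one_eq_mul_choose {m d : ℕ} (hm : 0 < m) (hd : 0 < d) :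
    (m * d - 1 + d).choose (m * d - 1) = m * ((m + 1) * d - 1).choose (m * d) := by
  have hmd : 1 ≤ m * d := Nat.one_le_iff_ne_zero.mpr (Nat.mul_pos hm hd).ne'
  have ha : (m + 1) * d - 1 = m * d - 1 + d := by rw [add_mul, one_mul]; omega
  have h := Nat.choose_succ_right_eq (m * d - 1 + d) (m * d - 1)
  rw [Nat.sub_add_cancel hmd, Nat.add_sub_cancel_left] at h
  rw [ha]
  refine Nat.eq_of_mul_eq_mul_right hd ?_
  rw [← h, mul_left_comm, mul_assoc]

open ArithmeticFunction in
/-- If `T` is the number of weakly decreasing tuples with `n` entries in `{0,…,mn−1}`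
whose sum is congruent to `g(m,n)` mod `mn` (i.e. the number of `S_n`-orbits on
`D(m,n)`), then `n·T = ∑_{d | n} (−1)^(m(n+d)) · μ(n/d) · C((m+1)d − 1, md)`. -/
theorem card_orbits_D (m n : ℕ) (hm : 0 < m) (hn : 0 < n) :
    (n : ℤ) * Nat.card {x : Fin n → Fin (m * n) //
        (∀ i j : Fin n, i ≤ j → x j ≤ x i) ∧
        (∑ i, ((x i : ℕ) : ℤ)) ≡ genusZ m n [ZMOD ((m * n : ℕ) : ℤ)]} =
      ∑ d ∈ n.divisors,
        (-1 : ℤ) ^ (m * (n + d)) * moebius (n / d) *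
          (((m + 1) * d - 1).choose (m * d) : ℤ) := by
  change (n : ℤ) * (Nat.card {x : Fin n → Fin (m * n) // Antitone x ∧ _} : ℤ) = _
  rw [card_antitone_filter_sum (Fin (m * n)) n (fun a => ((a : ℕ) : ℤ))
    (· ≡ genusZ m n [ZMOD ((m * n : ℕ) : ℤ)])]
  refine mul_left_cancel₀ (Nat.cast_ne_zero.mpr hm.ne' : (m : ℤ) ≠ 0) ?_
  rw [← mul_assoc, ← Nat.cast_mul, natCast_mul_card_finsuppAntidiag_filter_modEq
    (Nat.mul_pos hm hn) (dvd_mul_left n m), mul_sum, ← Nat.sum_div_divisors n]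
  refine sum_congr rfl fun d hd => ?_
  have hdn := Nat.dvd_of_mem_divisors hd
  rw [sum_divisorsAntidiagonal_moebius_mul_ite_dvd_genusZ hn (Nat.div_dvd_of_dvd hdn),
    Nat.mul_div_assoc m (Nat.div_dvd_of_dvd hdn), Nat.div_div_self hdn hn.ne',
    Nat.choose_sub_one_eq_mul_choose hm (Nat.pos_of_mem_divisors hd)]
  push_cast
  ring
end

section
/- Fix positive integers m and n with n ≥ 2. For every x = (x_1,…,x_n) in D(m,n) there exists exactly one j ∈ {0,1,…,n−1} such that the tuple ((x_1 + jm) mod mn, …, (x_{n−1} + jm) mod mn), consisting of the first n−1 coordinates of the j-th shift sh^j(x), is a K_n^m-parking function. -/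
set_option maxHeartbeats 1000000


open Finset

namespace ParkAux

def F (m n : ℕ) (a : Fin (n-1) → ℕ) (t : ℕ) : ℕ :=
  (univ.filter (fun k => a k < m * t)).card

def mu (m n : ℕ) (a : Fin (n-1) → ℕ) (j : ℕ) : ℤ :=
  (n : ℤ) * F m n a (n - j) - ((n : ℤ) - 1) * ((n : ℤ) - (j : ℤ))

lemma F_zero (m n : ℕ) (a : Fin (n-1) → ℕ) : F m n a 0 = 0 := by
  simp [F]

lemma F_mono (m n : ℕ) (a : Fin (n-1) → ℕ) {s t : ℕ} (h : s ≤ t) :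
    F m n a s ≤ F m n a t := by
  apply card_le_card
  intro k hk
  simp only [mem_filter, mem_univ, true_and] at hk ⊢
  exact lt_of_lt_of_le hk (Nat.mul_le_mul_left m h)

lemma F_sat (m n : ℕ) (a : Fin (n-1) → ℕ) (ha : ∀ k, a k < m * n) {t : ℕ} (h : n ≤ t) :
    F m n a t = n - 1 := by
  have : (univ.filter (fun k : Fin (n-1) => a k < m * t)) = univ := by
    apply filter_true_of_mem
    intro k _
    exact lt_of_lt_of_le (ha k) (Nat.mul_le_mul_left m h)
  simp [F, this]

lemma F_split (m n : ℕ) (a : Fin (n-1) → ℕ) {s t : ℕ} (h : s ≤ t) :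
    F m n a t = F m n a s +
      (univ.filter (fun k => m * s ≤ a k ∧ a k < m * t)).card := by
  have hst : m * s ≤ m * t := Nat.mul_le_mul_left m h
  have h1 : (univ.filter (fun k : Fin (n-1) => a k < m * t)) =
      (univ.filter (fun k => a k < m * s)) ∪
      (univ.filter (fun k => m * s ≤ a k ∧ a k < m * t)) := by
    rw [← filter_or]
    apply filter_congr
    intro k _
    omega
  have hd : Disjoint (univ.filter (fun k : Fin (n-1) => a k < m * s))
      (univ.filter (fun k => m * s ≤ a k ∧ a k < m * t)) := by
    rw [Finset.disjoint_left]
    intro k hk1 hk2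
    simp only [mem_filter] at hk1 hk2
    omega
  rw [F, F, h1, card_union_of_disjoint hd]

lemma intKey1 (n Δ t : ℤ) (hn : 2 ≤ n) (h1 : 1 ≤ t) (h2 : t ≤ n - 1) :
    t ≤ Δ ↔ 0 < n * Δ - (n - 1) * t := by
  constructor
  · intro h
    nlinarith
  · intro h
    by_contra hc
    push_neg at hc
    nlinarith

lemma intKey2 (n Δ t : ℤ) (hn : 2 ≤ n) (h1 : t ≤ -1) (h2 : -(n-1) ≤ t) :
    t + 1 ≤ Δ ↔ 0 < n * Δ - (n - 1) * t := by
  constructor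
  · intro h
    nlinarith
  · intro h
    by_contra hc
    push_neg at hc
    nlinarith

/-- The key counting formula. -/
lemma card_count (m n : ℕ) (hm : 0 < m) (a : Fin (n-1) → ℕ) (ha : ∀ k, a k < m * n)
    (j i' : ℕ) (hj : j < n) (h1 : 1 ≤ i') (h2 : i' ≤ n - 1) :
    (univ.filter (fun k => (a k + j * m) % (m * n) < m * i')).card + F m n a (n - j)
      = F m n a ((n - j) + i') + F m n a (i' - j) := by
  have hjm : j * m = m * j := Nat.mul_comm j m
  have e1 : m * (n - j) + m * j = m * n := by
    rw [← Nat.mul_add]; congr 1; omega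
  have e2 : m * ((n - j) + i') = m * (n - j) + m * i' := Nat.mul_add m _ _
  have hQU : m * j ≤ m * n := Nat.mul_le_mul_left m (le_of_lt hj)
  have hTP : m * (i' - j) ≤ m * (n - j) := Nat.mul_le_mul_left m (by omega)
  have hsplit : ∀ k : Fin (n-1), ((a k + j * m) % (m * n) < m * i') ↔
      ((m * (n - j) ≤ a k ∧ a k < m * ((n - j) + i')) ∨ a k < m * (i' - j)) := by
    intro k
    have hak := ha k
    rcases le_or_gt i' j with hij | hij
    · have e3 : m * (i' - j) = 0 := by
        have : i' - j = 0 := by omega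
        simp [this]
      have e4 : m * i' ≤ m * j := Nat.mul_le_mul_left m hij
      rcases lt_or_ge (a k + j * m) (m * n) with hlt | hge
      · rw [Nat.mod_eq_of_lt hlt]
        omega
      · have hmod : (a k + j * m) % (m * n) = a k + j * m - m * n := by
          rw [Nat.mod_eq_sub_mod hge, Nat.mod_eq_of_lt (by omega)]
        rw [hmod]
        omega
    · have e3 : m * (i' - j) + m * j = m * i' := by
        rw [← Nat.mul_add]; congr 1; omega
      rcases lt_or_ge (a k + j * m) (m * n) with hlt | hge
      · rw [Nat.mod_eq_of_lt hlt]
        omega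
      · have hmod : (a k + j * m) % (m * n) = a k + j * m - m * n := by
          rw [Nat.mod_eq_sub_mod hge, Nat.mod_eq_of_lt (by omega)]
        rw [hmod]
        omega
  have hfil : (univ.filter (fun k => (a k + j * m) % (m * n) < m * i')) =
      (univ.filter (fun k => m * (n - j) ≤ a k ∧ a k < m * ((n - j) + i'))) ∪
      (univ.filter (fun k => a k < m * (i' - j))) := by
    rw [← filter_or]
    apply filter_congr
    intro k _
    exact hsplit k
  have hd : Disjoint
      (univ.filter (fun k : Fin (n-1) => m * (n - j) ≤ a k ∧ a k < m * ((n - j) + i')))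
      (univ.filter (fun k => a k < m * (i' - j))) := by
    rw [Finset.disjoint_left]
    intro k hk1 hk2
    simp only [mem_filter] at hk1 hk2
    omega
  rw [hfil, card_union_of_disjoint hd]
  have := F_split m n a (show n - j ≤ (n - j) + i' by omega)
  unfold F at this ⊢
  omega

/-- reformulation of one parking inequality as a `mu` comparison. -/
lemma count_ge_iff (m n : ℕ) (hm : 0 < m) (hn : 2 ≤ n) (a : Fin (n-1) → ℕ)
    (ha : ∀ k, a k < m * n) (j i' : ℕ) (hj : j < n) (h1 : 1 ≤ i') (h2 : i' ≤ n - 1) :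
    (i' ≤ (univ.filter (fun k => (a k + j * m) % (m * n) < m * i')).card) ↔
      mu m n a j < mu m n a (if i' ≤ j then j - i' else n + j - i') := by
  have hcard := card_count m n hm a ha j i' hj h1 h2
  rcases le_or_gt i' j with hij | hij
  · rw [if_pos hij]
    have hz : i' - j = 0 := by omega
    rw [hz, F_zero] at hcard
    set A := F m n a ((n - j) + i') with hA
    set B := F m n a (n - j) with hB
    have hBA : B ≤ A := by rw [hA, hB]; exact F_mono m n a (by omega)
    have hidx : n - (j - i') = (n - j) + i' := by omega
    have hkey := intKey1 (n : ℤ) ((A : ℤ) - B) (i' : ℤ)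
      (by exact_mod_cast hn) (by exact_mod_cast h1)
      (by have : (i' : ℤ) ≤ (n : ℤ) - 1 := by
            have : i' ≤ n - 1 := h2
            omega
          exact this)
    unfold mu
    rw [hidx]
    rw [← hA, ← hB]
    have hc1 : ((j - i' : ℕ) : ℤ) = (j : ℤ) - (i' : ℤ) := by omega
    rw [hc1]
    constructor
    · intro h
      have hle : (i' : ℤ) ≤ (A : ℤ) - B := by
        have hc := hcard
        omega
      have := hkey.1 hle
      nlinarith [this]
    · intro h
      have h0 : (0:ℤ) < (n : ℤ) * ((A : ℤ) - B) - ((n : ℤ) - 1) * (i' : ℤ) := by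
        nlinarith [h]
      have := hkey.2 h0
      omega
  · rw [if_neg (by omega)]
    have hsat : F m n a ((n - j) + i') = n - 1 := F_sat m n a ha (by omega)
    rw [hsat] at hcard
    set C := F m n a (i' - j) with hC
    set B := F m n a (n - j) with hB
    have hBn : B ≤ n - 1 := by
      rw [hB]
      unfold F
      have := card_filter_le (univ : Finset (Fin (n-1)))
        (fun k => a k < m * (n - j))
      simpa using this
    have hCn : C ≤ n - 1 := by
      rw [hC]
      unfold F
      have := card_filter_le (univ : Finset (Fin (n-1)))
        (fun k => a k < m * (i' - j))
      simpa using this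
    have hidx : n - (n + j - i') = i' - j := by omega
    have hkey := intKey2 (n : ℤ) ((C : ℤ) - B) ((i' : ℤ) - n)
      (by exact_mod_cast hn)
      (by have : i' ≤ n - 1 := h2; omega)
      (by omega)
    unfold mu
    rw [hidx, ← hC, ← hB]
    have hc1 : ((n + j - i' : ℕ) : ℤ) = (n : ℤ) + j - i' := by omega
    rw [hc1]
    constructor
    · intro h
      have hle : (i' : ℤ) - n + 1 ≤ (C : ℤ) - B := by
        have hc := hcard
        omega
      have := hkey.1 hle
      nlinarith [this]
    · intro h
      have h0 : (0:ℤ) < (n : ℤ) * ((C : ℤ) - B) - ((n : ℤ) - 1) * ((i' : ℤ) - n) := by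
        nlinarith [h]
      have := hkey.2 h0
      omega

lemma pred_card (m n : ℕ) (hm : 0 < m) (a : Fin (n-1) → ℕ) (j i' : ℕ) (h1 : 1 ≤ i') :
    (univ.filter (fun k => (a k + j * m) % (m * n) ≤ m * i' - 1)).card =
    (univ.filter (fun k => (a k + j * m) % (m * n) < m * i')).card := by
  congr 1
  apply filter_congr
  intro k _
  have hpos : 0 < m * i' := Nat.mul_pos hm (by omega)
  omega

lemma parking_iff (m n : ℕ) (hm : 0 < m) (hn : 2 ≤ n) (a : Fin (n-1) → ℕ)
    (ha : ∀ k, a k < m * n) (j : ℕ) (hj : j < n) :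
    IsParkingFunction m n (fun k => (a k + j * m) % (m * n)) ↔
      ∀ j', j' < n → j' ≠ j → mu m n a j < mu m n a j' := by
  constructor
  · intro h j' hj' hne
    rcases lt_or_gt_of_ne hne with hlt | hgt
    · -- j' < j, take i' = j - j'
      have h1 : 1 ≤ j - j' := by omega
      have h2 : j - j' ≤ n - 1 := by omega
      have h' := h ⟨j - j' - 1, by omega⟩
      have hval : ((⟨j - j' - 1, by omega⟩ : Fin (n-1)) : ℕ) = j - j' - 1 := rfl
      rw [hval] at h'
      have he : j - j' - 1 + 1 = j - j' := by omega
      rw [he, pred_card m n hm a j (j - j') h1] at h'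
      have := (count_ge_iff m n hm hn a ha j (j - j') hj h1 h2).1 h'
      rwa [if_pos (by omega), show j - (j - j') = j' by omega] at this
    · -- j < j', take i' = n + j - j'
      have h1 : 1 ≤ n + j - j' := by omega
      have h2 : n + j - j' ≤ n - 1 := by omega
      have h' := h ⟨n + j - j' - 1, by omega⟩
      have hval : ((⟨n + j - j' - 1, by omega⟩ : Fin (n-1)) : ℕ) = n + j - j' - 1 := rfl
      rw [hval] at h'
      have he : n + j - j' - 1 + 1 = n + j - j' := by omega
      rw [he, pred_card m n hm a j (n + j - j') h1] at h'
      have := (count_ge_iff m n hm hn a ha j (n + j - j') hj h1 h2).1 h'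
      rwa [if_neg (by omega), show n + j - (n + j - j') = j' by omega] at this
  · intro h i
    have hi2 : (i : ℕ) + 1 ≤ n - 1 := by omega
    have h1 : 1 ≤ (i : ℕ) + 1 := by omega
    rw [pred_card m n hm a j ((i : ℕ) + 1) h1]
    apply (count_ge_iff m n hm hn a ha j ((i : ℕ) + 1) hj h1 hi2).2
    apply h
    · split_ifs <;> omega
    · split_ifs <;> omega

lemma mu_inj (m n : ℕ) (hn : 2 ≤ n) (a : Fin (n-1) → ℕ) {j j' : ℕ} (hj : j < n)
    (hj' : j' < n) (h : mu m n a j = mu m n a j') : j = j' := by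
  unfold mu at h
  set A := (F m n a (n - j) : ℤ) with hA
  set B := (F m n a (n - j') : ℤ) with hB
  have hd : (j : ℤ) - j' = (n : ℤ) * ((j : ℤ) - j' + (A - B)) := by linear_combination -h
  rcases lt_trichotomy ((j : ℤ) - j' + (A - B)) 0 with hk | hk | hk
  · have h1 : (j : ℤ) - j' ≤ -n := by nlinarith
    omega
  · rw [hk, mul_zero] at hd; omega
  · have h1 : (n : ℤ) ≤ (j : ℤ) - j' := by nlinarith
    omega

end ParkAux

/-- For every `x ∈ D(m,n)` there is exactly one `j ∈ {0,…,n−1}` such that the first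
`n−1` coordinates of the `j`-th shift of `x` form a `K_n^m`-parking function. -/
theorem existsUnique_shift_parking (m n : ℕ) (hm : 0 < m) (hn : 2 ≤ n)
    (x : Fin n → ℕ) (hx : ∀ i, x i < m * n)
    (hsum : (∑ i, (x i : ℤ)) ≡ genusZ m n [ZMOD ((m * n : ℕ) : ℤ)]) :
    ∃! j : ℕ, j < n ∧
      IsParkingFunction m n
        (fun k : Fin (n - 1) =>
          (x (Fin.castLE (Nat.sub_le n 1) k) + j * m) % (m * n)) := by
  classical
  have ha : ∀ k : Fin (n - 1), (fun k : Fin (n-1) => x (Fin.castLE (Nat.sub_le n 1) k)) k < m * n :=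
    fun k => hx _
  set a : Fin (n - 1) → ℕ := fun k => x (Fin.castLE (Nat.sub_le n 1) k) with ha_def
  obtain ⟨j₀, hj₀, hmin⟩ := Finset.exists_min_image (Finset.range n) (ParkAux.mu m n a)
    ⟨0, Finset.mem_range.2 (by omega)⟩
  have hj₀n : j₀ < n := Finset.mem_range.1 hj₀
  have hstrict : ∀ j', j' < n → j' ≠ j₀ → ParkAux.mu m n a j₀ < ParkAux.mu m n a j' := by
    intro j' hj' hne
    refine lt_of_le_of_ne (hmin j' (Finset.mem_range.2 hj')) ?_
    intro he
    exact hne (ParkAux.mu_inj m n hn a hj' hj₀n he.symm)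
  refine ⟨j₀, ⟨hj₀n, ?_⟩, ?_⟩
  · exact (ParkAux.parking_iff m n hm hn a ha j₀ hj₀n).2 hstrict
  · rintro y ⟨hy, hpark⟩
    by_contra hne
    have h1 := (ParkAux.parking_iff m n hm hn a ha y hy).1 hpark j₀ hj₀n
      (fun he => hne he.symm)
    have h2 := hstrict y hy hne
    omega
end

section
/- Fix positive integers m and n with n ≥ 2. Let λ = (λ_1 ≥ λ_2 ≥ … ≥ λ_n) be a weakly decreasing break divisor on K_n^m. Then for every j with 1 ≤ j ≤ n−1, the weakly decreasing rearrangement of the tuple ((λ_1 + jm) mod mn, …, (λ_n + jm) mod mn) is not a break divisor on K_n^m. -/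
lemma two_dvd_tri (m c : ℤ) : (2:ℤ) ∣ m * c * (c - 1) := by
  obtain ⟨k, hk⟩ := Int.even_mul_succ_self (c - 1)
  exact ⟨m * k, by linear_combination m * hk⟩

lemma tri_mul (m c : ℤ) : m * c * (c - 1) / 2 * 2 = m * c * (c - 1) :=
  Int.ediv_mul_cancel (two_dvd_tri m c)

/-- If `λ` is a weakly decreasing break divisor on `K_n^m`, then for every
`1 ≤ j ≤ n−1` the weakly decreasing rearrangement of the shifted tuple
`((λ_1 + jm) mod mn, …, (λ_n + jm) mod mn)` is not a break divisor on `K_n^m`. -/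
theorem shift_of_break_not_break (m n : ℕ) (hm : 0 < m) (hn : 2 ≤ n)
    (lam : Fin n → ℕ)
    (hmono : ∀ i j : Fin n, i ≤ j → lam j ≤ lam i)
    (hbreak : IsBreakDivisor m n lam) :
    ∀ j : ℕ, 1 ≤ j → j ≤ n - 1 →
      ∀ nu : Fin n → ℕ,
        (∀ i i' : Fin n, i ≤ i' → nu i' ≤ nu i) →
        (∃ σ : Equiv.Perm (Fin n), ∀ i, nu i = (lam (σ i) + j * m) % (m * n)) →
        ¬ IsBreakDivisor m n nu := by
  rintro j hj1 hj2 nu _ ⟨σ, hσ⟩ hnub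
  have h1n : 1 ≤ n := by omega
  have hjn : j + 1 ≤ n := by omega
  have hmZ : (1:ℤ) ≤ m := by exact_mod_cast hm
  have hnZ : (2:ℤ) ≤ n := by exact_mod_cast hn
  have hjZ1 : (1:ℤ) ≤ j := by exact_mod_cast hj1
  have hjZn : (j:ℤ) + 1 ≤ n := by exact_mod_cast hjn
  -- upper bound on lam
  have hub : ∀ i : Fin n, (lam i : ℤ) ≤ (m:ℤ) * n - m - 1 := by
    intro i
    have hcard : (Finset.univ.erase i).card = n - 1 := by
      simp
    have hne : (Finset.univ.erase i).Nonempty := by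
      rw [← Finset.card_pos, hcard]; omega
    have hb := hbreak.2 _ hne
    rw [hcard, Finset.sum_erase_eq_sub (Finset.mem_univ i), hbreak.1,
      Nat.cast_sub h1n] at hb
    push_cast at hb
    have t1 := tri_mul m ((n:ℤ) - 1)
    have t2 := tri_mul m (n:ℤ)
    unfold genusZ at hb
    nlinarith [t1, t2, hb]
  classical
  set W : Finset (Fin n) := Finset.univ.filter
    (fun i => (m:ℤ)*n ≤ (lam (σ i):ℤ) + j*m) with hW
  have key : ∀ i : Fin n, (nu i : ℤ) =
      (lam (σ i):ℤ) + j*m - (if i ∈ W then (m:ℤ)*n else 0) := by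
    intro i
    have hx0 : (0:ℤ) ≤ (lam (σ i):ℤ) + j*m := by positivity
    have hx2 : (lam (σ i):ℤ) + j*m < 2*((m:ℤ)*n) := by
      have := hub (σ i)
      nlinarith
    have hcast : (nu i : ℤ) = ((lam (σ i):ℤ) + (j:ℤ)*m) % ((m:ℤ)*n) := by
      rw [hσ i]; push_cast; ring_nf
    by_cases hi : i ∈ W
    · have hle : (m:ℤ)*n ≤ (lam (σ i):ℤ) + j*m := by
        simpa [hW] using hi
      have hx : ((lam (σ i):ℤ) + (j:ℤ)*m) % ((m:ℤ)*n)
          = ((lam (σ i):ℤ) + (j:ℤ)*m - (m:ℤ)*n) % ((m:ℤ)*n) := by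
        conv_lhs => rw [show ((lam (σ i):ℤ) + (j:ℤ)*m)
          = ((lam (σ i):ℤ) + (j:ℤ)*m - (m:ℤ)*n) + (m:ℤ)*n*1 by ring]
        rw [Int.add_mul_emod_self_left]
      rw [hcast, if_pos hi, hx,
        Int.emod_eq_of_lt (by linarith) (by linarith)]
    · have hlt : (lam (σ i):ℤ) + j*m < (m:ℤ)*n := by
        by_contra h
        exact hi (by simp only [hW, Finset.mem_filter, Finset.mem_univ, true_and]; linarith)
      rw [hcast, if_neg hi, Int.emod_eq_of_lt hx0 hlt]
      ring
  have hsum_nu : ∑ i, (nu i : ℤ) =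
      (∑ i, (lam i : ℤ)) + (n:ℤ)*((j:ℤ)*m) - (W.card:ℤ)*((m:ℤ)*n) := by
    calc ∑ i, (nu i:ℤ)
        = ∑ i, ((lam (σ i):ℤ) + (j:ℤ)*m - if i ∈ W then (m:ℤ)*n else 0) :=
          Finset.sum_congr rfl (fun i _ => key i)
      _ = _ := by
          rw [Finset.sum_sub_distrib, Finset.sum_add_distrib,
            Finset.sum_ite_mem, Finset.univ_inter, Finset.sum_const,
            Finset.sum_const, Equiv.sum_comp σ (fun i => (lam i:ℤ))]
          simp [Finset.card_univ, nsmul_eq_mul]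
  have hmn : (0:ℤ) < (m:ℤ)*n := by positivity
  have hWcard : W.card = j := by
    have h1 := hnub.1
    rw [hsum_nu, hbreak.1] at h1
    have h3 : (W.card:ℤ) * ((m:ℤ)*n) = (j:ℤ) * ((m:ℤ)*n) := by linear_combination -h1
    have h4 : (W.card:ℤ) = j := mul_right_cancel₀ (ne_of_gt hmn) h3
    exact_mod_cast h4
  have hWne : W.Nonempty := by
    rw [← Finset.card_pos, hWcard]; omega
  have hb2 := hnub.2 W hWne
  rw [hWcard] at hb2
  have hsumW : ∑ i ∈ W, (nu i:ℤ) =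
      (∑ i ∈ W, (lam (σ i):ℤ)) + (j:ℤ)*((j:ℤ)*m) - (j:ℤ)*((m:ℤ)*n) := by
    calc ∑ i ∈ W, (nu i:ℤ)
        = ∑ i ∈ W, ((lam (σ i):ℤ) + (j:ℤ)*m - (m:ℤ)*n) :=
          Finset.sum_congr rfl (fun i hi => by rw [key i, if_pos hi])
      _ = _ := by
          rw [Finset.sum_sub_distrib, Finset.sum_add_distrib,
            Finset.sum_const, Finset.sum_const, hWcard]
          simp [nsmul_eq_mul]
  have hT : (W.image σ).card = j := by
    rw [Finset.card_image_of_injective W σ.injective, hWcard]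
  have hTsum : ∑ t ∈ W.image σ, (lam t:ℤ) = ∑ i ∈ W, (lam (σ i):ℤ) :=
    Finset.sum_image (fun a _ b _ h => σ.injective h)
  have hTc_card : ((W.image σ)ᶜ).card = n - j := by
    rw [Finset.card_compl, hT]; simp
  have hTc_ne : ((W.image σ)ᶜ).Nonempty := by
    rw [← Finset.card_pos, hTc_card]; omega
  have hb3 := hbreak.2 _ hTc_ne
  have hcompl : ∑ t ∈ (W.image σ)ᶜ, (lam t:ℤ) =
      (∑ i, (lam i:ℤ)) - ∑ t ∈ W.image σ, (lam t:ℤ) := by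
    rw [← Finset.sum_compl_add_sum (W.image σ) (fun t => (lam t:ℤ))]; ring
  rw [hTc_card, hcompl, hbreak.1, hTsum, Nat.cast_sub (by omega : j ≤ n)] at hb3
  rw [hsumW] at hb2
  unfold genusZ at hb3
  have t1 := tri_mul m (j:ℤ)
  have t2 := tri_mul m ((n:ℤ) - j)
  have t3 := tri_mul m (n:ℤ)
  nlinarith [hb2, hb3, t1, t2, t3]
end
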